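/- arXiv:2603.19663 — 8 statements merged into one kernel-verified Lean document; each statement's English description precedes it below -/
import Mathlib

section
/- Let N ≥ 1 be an integer, D_u, D_v > 0, q > 1 and κ < −N/2, and set ρ(r) = r^{N−1} e^{r²/(4D_v)}. There exists ε > 0 such that for every 0 < λ < ε there is no positive C² function φ : [0,∞) → ℝ with φ(0) = 1, φ'(0) = 0 solving D_v (ρ φ')' = κ ρ φ + λ ρ e^{−r²/(4D_u)} φ^q on (0,∞); in fact for such λ the solution of the initial value problem reaches 0 at some finite point. -/
/-!
Pick `B > 1` with `m := κ + λ B^(q-1) < -N/2`; this is possible exactly when `λ < -N/2 - κ`.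
As long as `φ ≤ B`, the equation gives `(Dᵥ ρ φ')' ≤ m ρ φ`, while for `a` large the function
`ψ(r) = (a - r²) e^{-r²/(4Dᵥ)}`, positive on `[0, √a)` and zero at `√a`, satisfies
`(Dᵥ ρ ψ')' ≥ m ρ ψ` there. Hence the Wronskian `Dᵥ ρ (φ' ψ - φ ψ')` is nonincreasing; it is
nonpositive near `0` because `φ'(0) = 0` forces the flux `Dᵥ ρ φ'` to be nonpositive. So `φ / ψ`
decreases from its value `1 / a` at `0`, giving `φ ≤ ψ / a ≤ 1 < B`: the bound `φ ≤ B` propagates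
all the way to `√a`, where it yields `φ(√a) ≤ 0`.
-/

open Real Set Filter Topology

theorem antitoneOn_Ioo_of_hasDerivAt_nonpos {f f' : ℝ → ℝ} {a b : ℝ}
    (hf : ∀ x ∈ Ioo a b, HasDerivAt f (f' x) x) (hf' : ∀ x ∈ Ioo a b, f' x ≤ 0) :
    AntitoneOn f (Ioo a b) :=
  antitoneOn_of_hasDerivWithinAt_nonpos (convex_Ioo a b)
    (fun x hx => (hf x hx).continuousAt.continuousWithinAt)
    (fun x hx => (hf x (interior_subset hx)).hasDerivWithinAt)
    (fun x hx => hf' x (interior_subset hx))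

theorem le_of_hasDerivWithinAt_Ici_of_le_deriv {f f' : ℝ → ℝ} {a b c d : ℝ} (hab : a < b)
    (ha : HasDerivWithinAt f d (Ici a) a) (hf : ∀ x ∈ Ioo a b, HasDerivAt f (f' x) x)
    (hc : ∀ x ∈ Ioo a b, c ≤ f' x) : c ≤ d := by
  have hslope : ∀ x ∈ Ioo a b, c ≤ slope f a x := by
    intro x hx
    have hcont : ContinuousOn f (Icc a x) := fun y hy => by
      rcases hy.1.eq_or_lt with rfl | hay
      · exact ha.continuousWithinAt.mono Icc_subset_Ici_self
      · exact (hf y ⟨hay, hy.2.trans_lt hx.2⟩).continuousAt.continuousWithinAt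
    have hderiv : ∀ y ∈ interior (Icc a x), HasDerivAt f (f' y) y := fun y hy => by
      rw [interior_Icc] at hy
      exact hf y ⟨hy.1, hy.2.trans hx.2⟩
    have hmvt := (convex_Icc a x).mul_sub_le_image_sub_of_le_deriv hcont
      (fun y hy => (hderiv y hy).differentiableAt.differentiableWithinAt)
      (fun y hy => (hderiv y hy).deriv ▸ hc y (by
        rw [interior_Icc] at hy; exact ⟨hy.1, hy.2.trans hx.2⟩))
      a (left_mem_Icc.2 hx.1.le) x (right_mem_Icc.2 hx.1.le) hx.1.le
    rw [slope_def_field, le_div_iff₀ (sub_pos.2 hx.1)]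
    exact hmvt
  have htend := hasDerivWithinAt_iff_tendsto_slope.1 (hasDerivWithinAt_Ioi_iff_Ici.2 ha)
  rw [sdiff_singleton_eq_self self_notMem_Ioi] at htend
  exact ge_of_tendsto htend (eventually_of_mem (Ioo_mem_nhdsGT hab) hslope)

theorem nonpos_of_antitoneOn_of_hasDerivWithinAt_zero {f df p F : ℝ → ℝ} {a b : ℝ}
    (h0 : HasDerivWithinAt f 0 (Ici a) a) (hf : ∀ x ∈ Ioo a b, HasDerivAt f (df x) x)
    (hp : MonotoneOn p (Ioo a b)) (hp0 : ∀ x ∈ Ioo a b, 0 < p x)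
    (hFp : ∀ x ∈ Ioo a b, F x = p x * df x) (hF : AntitoneOn F (Ioo a b)) :
    ∀ x ∈ Ioo a b, F x ≤ 0 := by
  by_contra! ⟨x₀, hx₀, hFx₀⟩
  have hdf₀ : 0 < df x₀ := by
    rw [hFp x₀ hx₀] at hFx₀; exact pos_of_mul_pos_right hFx₀ (hp0 x₀ hx₀).le
  have hdf : ∀ x ∈ Ioo a x₀, df x₀ ≤ df x := fun x hx => by
    have hxab : x ∈ Ioo a b := ⟨hx.1, hx.2.trans hx₀.2⟩
    have hFx := hF hxab hx₀ hx.2.le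
    have hpx := hp hxab hx₀ hx.2.le
    rw [hFp x hxab, hFp x₀ hx₀] at hFx
    have := hp0 x hxab
    nlinarith
  have := le_of_hasDerivWithinAt_Ici_of_le_deriv hx₀.1 h0
    (fun x hx => hf x ⟨hx.1, hx.2.trans hx₀.2⟩) hdf
  linarith

theorem antitoneOn_wronskian {φ ψ F P dφ dψ g h : ℝ → ℝ} {a b : ℝ}
    (hφ : ∀ x ∈ Ioo a b, HasDerivAt φ (dφ x) x) (hψ : ∀ x ∈ Ioo a b, HasDerivAt ψ (dψ x) x)
    (hF : ∀ x ∈ Ioo a b, HasDerivAt F (g x) x) (hP : ∀ x ∈ Ioo a b, HasDerivAt P (h x) x)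
    (hFP : ∀ x ∈ Ioo a b, F x * dψ x = dφ x * P x)
    (hgh : ∀ x ∈ Ioo a b, g x * ψ x ≤ φ x * h x) :
    AntitoneOn (fun x => F x * ψ x - φ x * P x) (Ioo a b) :=
  antitoneOn_Ioo_of_hasDerivAt_nonpos
    (fun x hx => ((hF x hx).mul (hψ x hx)).sub ((hφ x hx).mul (hP x hx)))
    (fun x hx => by linarith [hFP x hx, hgh x hx])

theorem antitoneOn_div_of_wronskian_nonpos {φ ψ dφ dψ : ℝ → ℝ} {a b : ℝ}
    (hφ : ∀ x ∈ Ioo a b, HasDerivAt φ (dφ x) x) (hψ : ∀ x ∈ Ioo a b, HasDerivAt ψ (dψ x) x)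
    (hψ0 : ∀ x ∈ Ioo a b, 0 < ψ x) (hW : ∀ x ∈ Ioo a b, dφ x * ψ x - φ x * dψ x ≤ 0) :
    AntitoneOn (fun x => φ x / ψ x) (Ioo a b) :=
  antitoneOn_Ioo_of_hasDerivAt_nonpos
    (fun x hx => (hφ x hx).div (hψ x hx) (hψ0 x hx).ne')
    (fun x hx => div_nonpos_of_nonpos_of_nonneg (hW x hx) (sq_nonneg _))

theorem AntitoneOn.le_of_tendsto_nhdsGT {f e : ℝ → ℝ} {a b L : ℝ}
    (hf : AntitoneOn f (Ioo a b)) (he : Tendsto e (𝓝[>] a) (𝓝 L))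
    (hfe : ∀ x ∈ Ioo a b, f x ≤ e x) : ∀ x ∈ Ioo a b, f x ≤ L := fun _ hx =>
  ge_of_tendsto he <| eventually_of_mem (Ioo_mem_nhdsGT hx.1) fun s hs =>
    have hs' : s ∈ Ioo a b := ⟨hs.1, hs.2.trans hx.2⟩
    (hf hs' hx hs.2.le).trans (hfe s hs')

theorem forall_lt_of_forall_le_imp_lt {f : ℝ → ℝ} {a b B : ℝ} (hf : ContinuousOn f (Icc a b))
    (ha : f a < B) (h : ∀ t ∈ Ioc a b, (∀ x ∈ Ioo a t, f x ≤ B) → f t < B) :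
    ∀ t ∈ Icc a b, f t < B := by
  by_contra! hex
  set S := Icc a b ∩ f ⁻¹' Ici B
  have hbdd : BddBelow S := ⟨a, fun _ hx => hx.1.1⟩
  have hS : sInf S ∈ S := (hf.preimage_isClosed_of_isClosed isClosed_Icc isClosed_Ici).csInf_mem
    (by obtain ⟨t, ht, hft⟩ := hex; exact ⟨t, ht, hft⟩) hbdd
  have hbelow : ∀ x ∈ Ioo a (sInf S), f x ≤ B := fun x hx => by
    by_contra! hfx
    exact (csInf_le hbdd ⟨⟨hx.1.le, hx.2.le.trans hS.1.2⟩, hfx.le⟩).not_gt hx.2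
  have hlt : a < sInf S := hS.1.1.lt_of_ne fun heq => (heq ▸ hS.2 : B ≤ f a).not_gt ha
  exact (h _ ⟨hlt, hS.1.2⟩ hbelow).not_ge hS.2

theorem reaction_le_linear {κ lam q B ρ φ e : ℝ} (hlam : 0 ≤ lam) (hq : 1 ≤ q) (hρ : 0 ≤ ρ)
    (hφ : 0 < φ) (hφB : φ ≤ B) (he : e ≤ 1) :
    κ * ρ * φ + lam * ρ * e * φ ^ q ≤ (κ + lam * B ^ (q - 1)) * ρ * φ := by
  have hpow : φ ^ q ≤ B ^ (q - 1) * φ :=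
    calc φ ^ q = φ ^ (q - 1) * φ := by rw [← rpow_add_one hφ.ne', sub_add_cancel]
      _ ≤ B ^ (q - 1) * φ := by gcongr
  have hlamρ := mul_nonneg hlam hρ
  nlinarith [mul_le_mul_of_nonneg_left he (mul_nonneg hlamρ (rpow_nonneg hφ.le q)),
    mul_le_mul_of_nonneg_left hpow hlamρ]

theorem exists_le_mul_and_le (c : ℝ) {μ : ℝ} (hμ : 0 < μ) : ∃ a, c ≤ μ * a ∧ c ≤ a :=
  ⟨max c (c / μ), (div_le_iff₀' hμ).1 (le_max_right _ _), le_max_left _ _⟩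

theorem exp_neg_sq_div_le_one {D : ℝ} (hD : 0 ≤ D) (r : ℝ) : exp (-r ^ 2 / (4 * D)) ≤ 1 :=
  exp_le_one_iff.2 (div_nonpos_of_nonpos_of_nonneg (neg_nonpos.2 (sq_nonneg r)) (by positivity))

theorem exists_one_lt_mul_rpow_lt {c ε : ℝ} (p : ℝ) (hcε : c < ε) : ∃ B, 1 < B ∧ c * B ^ p < ε := by
  have h : Tendsto (fun B : ℝ => c * B ^ p) (𝓝[>] 1) (𝓝 (c * 1 ^ p)) :=
    ((continuousAt_id.rpow_const (Or.inl one_ne_zero)).const_mul c).tendsto.mono_left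
      nhdsWithin_le_nhds
  rw [one_rpow, mul_one] at h
  obtain ⟨B, hB, hB1⟩ := ((h.eventually_lt_const hcε).and self_mem_nhdsWithin).exists
  exact ⟨B, hB1, hB⟩

namespace Profile

noncomputable def weight (N : ℕ) (Dv r : ℝ) : ℝ := r ^ (N - 1) * exp (r ^ 2 / (4 * Dv))

noncomputable def barrier (Dv a r : ℝ) : ℝ := (a - r ^ 2) * exp (-r ^ 2 / (4 * Dv))

noncomputable def barrierDeriv (Dv a r : ℝ) : ℝ :=
  (-(2 * r) - (a - r ^ 2) * r / (2 * Dv)) * exp (-r ^ 2 / (4 * Dv))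

-- The flux `Dᵥ ρ ψ'` of `ψ = barrier Dv a` in closed form (`weight_mul_barrierDeriv`).
noncomputable def barrierFlux (N : ℕ) (Dv a r : ℝ) : ℝ :=
  -(2 * Dv) * r ^ N - (a * r ^ N - r ^ (N + 2)) / 2

noncomputable def barrierFluxDeriv (N : ℕ) (Dv a r : ℝ) : ℝ :=
  r ^ (N - 1) * (-(2 * Dv * N) - (a * N - (N + 2) * r ^ 2) / 2)

theorem weight_pos {N : ℕ} {Dv r : ℝ} (hr : 0 < r) : 0 < weight N Dv r := by
  unfold weight; positivity

theorem monotoneOn_weight {N : ℕ} {Dv : ℝ} (hDv : 0 ≤ Dv) :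
    MonotoneOn (weight N Dv) (Ici 0) := fun x hx y _ hxy =>
  mul_le_mul (pow_le_pow_left₀ hx hxy _) (exp_le_exp.2 (by gcongr)) (exp_pos _).le
    (pow_nonneg (le_trans hx hxy) _)

theorem hasDerivAt_barrier (Dv a r : ℝ) : HasDerivAt (barrier Dv a) (barrierDeriv Dv a r) r := by
  have hexp : HasDerivAt (fun x => exp (-x ^ 2 / (4 * Dv)))
      (exp (-r ^ 2 / (4 * Dv)) * (-(2 * r) / (4 * Dv))) r := by
    simpa using ((hasDerivAt_pow 2 r).neg.div_const (4 * Dv)).exp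
  refine HasDerivAt.congr_deriv (f := barrier Dv a) (((hasDerivAt_pow 2 r).const_sub a).mul hexp) ?_
  unfold barrierDeriv
  ring

theorem hasDerivAt_barrierFlux {N : ℕ} (hN : 1 ≤ N) (Dv a r : ℝ) :
    HasDerivAt (barrierFlux N Dv a) (barrierFluxDeriv N Dv a r) r := by
  have h := ((hasDerivAt_pow N r).const_mul (-(2 * Dv))).sub
    ((((hasDerivAt_pow N r).const_mul a).sub (hasDerivAt_pow (N + 2) r)).div_const 2)
  refine h.congr_deriv ?_
  obtain ⟨k, rfl⟩ := Nat.exists_eq_add_of_le' hN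
  simp only [barrierFluxDeriv, Nat.add_sub_cancel, show k + 1 + 2 - 1 = k + 2 by omega]
  push_cast
  ring

theorem barrierFlux_zero {N : ℕ} (hN : N ≠ 0) (Dv a : ℝ) : barrierFlux N Dv a 0 = 0 := by
  simp [barrierFlux, hN]

theorem weight_mul_barrierDeriv {N : ℕ} (hN : 1 ≤ N) {Dv : ℝ} (hDv : Dv ≠ 0) (a r : ℝ) :
    Dv * (weight N Dv r * barrierDeriv Dv a r) = barrierFlux N Dv a r := by
  obtain ⟨k, rfl⟩ := Nat.exists_eq_add_of_le' hN
  simp only [weight, barrierDeriv, barrierFlux, Nat.add_sub_cancel, neg_div, exp_neg]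
  field_simp
  ring

theorem weight_mul_barrier (N : ℕ) (Dv a r : ℝ) :
    weight N Dv r * barrier Dv a r = r ^ (N - 1) * (a - r ^ 2) := by
  simp only [weight, barrier, neg_div, exp_neg]
  field_simp

theorem mul_barrier_le_barrierFluxDeriv {N : ℕ} {Dv a μ r : ℝ} (hμa : 2 * N * Dv ≤ μ * a)
    (ha : 2 * N * Dv ≤ a) (hr : 0 ≤ r) (hra : r ^ 2 ≤ a) :
    (-(N : ℝ) / 2 - μ) * (weight N Dv r * barrier Dv a r) ≤ barrierFluxDeriv N Dv a r := by
  rw [weight_mul_barrier, barrierFluxDeriv]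
  have key : 0 ≤ -(2 * Dv * N) - (a * N - (N + 2) * r ^ 2) / 2 -
      (-(N : ℝ) / 2 - μ) * (a - r ^ 2) := by
    rcases le_total μ 1 with hμ | hμ
    · nlinarith [sq_nonneg r]
    · nlinarith
  nlinarith [pow_nonneg hr (N - 1)]

theorem barrier_pos {Dv a r : ℝ} (hr : r ^ 2 < a) : 0 < barrier Dv a r :=
  mul_pos (sub_pos.2 hr) (exp_pos _)

theorem barrier_le {Dv a : ℝ} (hDv : 0 ≤ Dv) (ha : 0 ≤ a) (r : ℝ) : barrier Dv a r ≤ a := by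
  unfold barrier
  rcases le_total (r ^ 2) a with hr | hr
  · nlinarith [exp_neg_sq_div_le_one hDv r, sq_nonneg r]
  · nlinarith [exp_pos (-r ^ 2 / (4 * Dv))]

@[simp] theorem barrier_zero (Dv a : ℝ) : barrier Dv a 0 = a := by simp [barrier]

theorem barrier_sqrt {a : ℝ} (ha : 0 ≤ a) (Dv : ℝ) : barrier Dv a √a = 0 := by
  simp [barrier, sq_sqrt ha]

theorem flux_nonpos {N : ℕ} {Dv t : ℝ} {φ dφ G : ℝ → ℝ} (hDv : 0 < Dv)
    (hφ0 : HasDerivWithinAt φ 0 (Ici 0) 0) (hφ : ∀ x ∈ Ioo 0 t, HasDerivAt φ (dφ x) x)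
    (hF : ∀ x ∈ Ioo 0 t, HasDerivAt (fun s => Dv * (weight N Dv s * dφ s)) (G x) x)
    (hG : ∀ x ∈ Ioo 0 t, G x ≤ 0) : ∀ x ∈ Ioo 0 t, Dv * (weight N Dv x * dφ x) ≤ 0 :=
  nonpos_of_antitoneOn_of_hasDerivWithinAt_zero hφ0 hφ (p := fun x => Dv * weight N Dv x)
    (fun _ hx _ hy hxy => mul_le_mul_of_nonneg_left
      (monotoneOn_weight hDv.le hx.1.le hy.1.le hxy) hDv.le)
    (fun _ hx => mul_pos hDv (weight_pos hx.1)) (fun _ _ => (mul_assoc _ _ _).symm)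
    (antitoneOn_Ioo_of_hasDerivAt_nonpos hF hG)

theorem mul_le_mul_barrier {N : ℕ} (hN : 1 ≤ N) {Dv μ a t : ℝ} {φ dφ G : ℝ → ℝ}
    (hDv : 0 < Dv) (hμ : 0 < μ) (hμa : 2 * N * Dv ≤ μ * a) (ha : 2 * N * Dv ≤ a) (ht : t ≤ √a)
    (hφ0 : HasDerivWithinAt φ 0 (Ici 0) 0) (hφ : ∀ x ∈ Ioo 0 t, HasDerivAt φ (dφ x) x)
    (hφpos : ∀ x ∈ Ioo 0 t, 0 < φ x)
    (hF : ∀ x ∈ Ioo 0 t, HasDerivAt (fun s => Dv * (weight N Dv s * dφ s)) (G x) x)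
    (hG : ∀ x ∈ Ioo 0 t, G x ≤ (-(N : ℝ) / 2 - μ) * weight N Dv x * φ x) :
    ∀ x ∈ Ioo 0 t, a * φ x ≤ φ 0 * barrier Dv a x := by
  have hsq : ∀ x ∈ Ioo 0 t, x ^ 2 < a := fun x hx => (lt_sqrt hx.1.le).1 (hx.2.trans_le ht)
  have hψ : ∀ x ∈ Ioo 0 t, 0 < barrier Dv a x := fun x hx => barrier_pos (hsq x hx)
  have hw : ∀ x ∈ Ioo 0 t, 0 < weight N Dv x := fun x hx => weight_pos hx.1
  have hψ' : ∀ x ∈ Ioo 0 t, HasDerivAt (barrier Dv a) (barrierDeriv Dv a x) x :=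
    fun x _ => hasDerivAt_barrier Dv a x
  have hflux_nonpos := flux_nonpos (N := N) hDv hφ0 hφ hF fun x hx => (hG x hx).trans (by
    have := mul_pos (hw x hx) (hφpos x hx)
    have : (0 : ℝ) ≤ N := N.cast_nonneg
    nlinarith)
  have hwronskian_nonpos : ∀ x ∈ Ioo 0 t, Dv * (weight N Dv x * dφ x) * barrier Dv a x -
      φ x * barrierFlux N Dv a x ≤ 0 := by
    refine (antitoneOn_wronskian hφ hψ' hF (fun x _ => hasDerivAt_barrierFlux hN Dv a x)
      (fun x _ => ?_) (fun x hx => ?_)).le_of_tendsto_nhdsGT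
      (e := fun s => -(φ s * barrierFlux N Dv a s)) ?_ (fun x hx => ?_)
    · rw [← weight_mul_barrierDeriv hN hDv.ne']; ring
    · have h1 := mul_le_mul_of_nonneg_right (hG x hx) (hψ x hx).le
      have h2 := mul_le_mul_of_nonneg_left
        (mul_barrier_le_barrierFluxDeriv hμa ha hx.1.le (hsq x hx).le) (hφpos x hx).le
      linarith
    · have hφlim := hφ0.continuousWithinAt.mono (Ioi_subset_Ici_self (a := (0 : ℝ)))
      have hPlim := ((hasDerivAt_barrierFlux hN Dv a 0).continuousAt.tendsto.mono_left
        (nhdsWithin_le_nhds (s := Ioi 0)))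
      simpa [barrierFlux_zero (by omega : N ≠ 0)] using (hφlim.tendsto.mul hPlim).neg
    · have := mul_nonpos_of_nonpos_of_nonneg (hflux_nonpos x hx) (hψ x hx).le
      linarith
  have hratio := antitoneOn_div_of_wronskian_nonpos hφ hψ' hψ fun x hx => by
    have hWx := hwronskian_nonpos x hx
    rw [← weight_mul_barrierDeriv hN hDv.ne'] at hWx
    by_contra! hpos
    nlinarith [mul_pos (mul_pos hDv (hw x hx)) hpos]
  intro x hx
  have ha0 : 0 < a := (sq_nonneg x).trans_lt (hsq x hx)
  have hlim : Tendsto (fun s => φ s / barrier Dv a s) (𝓝[>] 0) (𝓝 (φ 0 / a)) := by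
    have hψlim := (hasDerivAt_barrier Dv a 0).continuousAt.tendsto.mono_left
      (nhdsWithin_le_nhds (s := Ioi 0))
    rw [barrier_zero] at hψlim
    exact (hφ0.continuousWithinAt.mono Ioi_subset_Ici_self).tendsto.div hψlim ha0.ne'
  have := hratio.le_of_tendsto_nhdsGT hlim (fun _ _ => le_rfl) x hx
  rw [div_le_div_iff₀ (hψ x hx) ha0] at this
  linarith

end Profile

/-- For the self-similar profile equation with `κ < −N/2` and `q > 1`,
there exists `ε > 0` such that for every `0 < λ < ε` there is no positive C² solution
on all of `[0,∞)` of `Dᵥ (ρ φ')' = κ ρ φ + λ ρ e^{-r²/(4Dᵤ)} φ^q`,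
`ρ(r) = r^{N-1} e^{r²/(4Dᵥ)}`, `φ(0)=1`, `φ'(0)=0` (the solution of the initial value
problem reaches `0` at some finite point). -/
theorem stmt10
    (N : ℕ) (hN : 1 ≤ N) (Du Dv κ q : ℝ)
    (hDu : 0 < Du) (hDv : 0 < Dv) (hq : 1 < q) (hκ : κ < -(N : ℝ) / 2)
    (ρ : ℝ → ℝ) (hρ : ∀ r : ℝ, ρ r = r ^ (N - 1) * Real.exp (r ^ 2 / (4 * Dv))) :
    ∃ ε > 0, ∀ lam : ℝ, 0 < lam → lam < ε →
      ¬ ∃ φ dφ : ℝ → ℝ,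
          (∀ r ∈ Ici (0:ℝ), 0 < φ r) ∧
          (∀ r ∈ Ici (0:ℝ), HasDerivWithinAt φ (dφ r) (Ici 0) r) ∧
          (∀ r ∈ Ioi (0:ℝ), HasDerivAt (fun s => Dv * (ρ s * dφ s))
            (κ * ρ r * φ r + lam * ρ r * Real.exp (-(r ^ 2) / (4 * Du)) * φ r ^ q) r) ∧
          φ 0 = 1 ∧ dφ 0 = 0 := by
  refine ⟨-(N : ℝ) / 2 - κ, by linarith, ?_⟩
  rintro lam hlam hlamε ⟨φ, dφ, hφpos, hφ', hF, hφ0, hdφ0⟩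
  obtain rfl : ρ = Profile.weight N Dv := funext hρ
  obtain ⟨B, hB1, hB⟩ := exists_one_lt_mul_rpow_lt (q - 1) hlamε
  have hNDv : 0 < 2 * N * Dv := by have : 0 < N := hN; positivity
  obtain ⟨a, hμa, ha⟩ := exists_le_mul_and_le (2 * N * Dv) (sub_pos.2 hB)
  have ha0 : 0 < a := hNDv.trans_le ha
  have hφcont : ContinuousOn φ (Ici 0) := fun x hx => (hφ' x hx).continuousWithinAt
  have hbound : ∀ t ∈ Ioc 0 √a, (∀ x ∈ Ioo 0 t, φ x ≤ B) → a * φ t ≤ Profile.barrier Dv a t := by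
    intro t ht hφB
    have hle := Profile.mul_le_mul_barrier hN hDv (sub_pos.2 hB) hμa ha ht.2
      (by simpa [hdφ0] using hφ' 0 self_mem_Ici)
      (fun x hx => (hφ' x hx.1.le).hasDerivAt (Ici_mem_nhds hx.1)) (fun x hx => hφpos x hx.1.le)
      (fun x hx => hF x hx.1) fun x hx => (reaction_le_linear hlam.le hq.le
        (Profile.weight_pos hx.1).le (hφpos x hx.1.le) (hφB x hx)
        (exp_neg_sq_div_le_one hDu.le x)).trans_eq (by ring)
    refine ContinuousWithinAt.closure_le
      (by rw [closure_Ioo ht.1.ne]; exact right_mem_Icc.2 ht.1.le)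
      ((hφcont t ht.1.le).mono (fun _ (hx : _ ∈ Ioo 0 t) => hx.1.le) |>.const_mul a)
      (Profile.hasDerivAt_barrier Dv a t).continuousAt.continuousWithinAt fun x hx => ?_
    simpa [hφ0] using hle x hx
  have hlt : ∀ t ∈ Icc 0 √a, φ t < B :=
    forall_lt_of_forall_le_imp_lt (hφcont.mono Icc_subset_Ici_self) (by rwa [hφ0])
      fun t ht hφB => by nlinarith [hbound t ht hφB, Profile.barrier_le hDv.le ha0.le t]
  have hR := hbound √a ⟨sqrt_pos.2 ha0, le_rfl⟩ fun x hx => (hlt x ⟨hx.1.le, hx.2.le⟩).le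
  rw [Profile.barrier_sqrt ha0.le] at hR
  nlinarith [hφpos √a (sqrt_nonneg a)]
end

section
/- Let N ≥ 1 be an integer, D_u, D_v > 0, q > 1, and set ρ(r) = r^{N−1} e^{r²/(4D_v)}. For every ε > 0 there exists C_ε > 0 such that for every C¹ function u : [0,∞) → ℝ with ∫₀^∞ ρ(r) u(r)² dr < ∞ and ∫₀^∞ ρ(r) u'(r)² dr < ∞, one has ∫₀^∞ ρ(r) u(r)² dr ≤ ε ∫₀^∞ ρ(r) u'(r)² dr + C_ε ( ∫₀^∞ ρ(r) e^{−r²/(4D_u)} |u(r)|^{q+1} dr )^{2/(q+1)}. -/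
open Real Set MeasureTheory Filter
open scoped ENNReal

/-!
Split `(0, ∞)` at `R = 2 Dᵥ (1 + ε⁻¹)`. Beyond `R` the weight grows fast,
`ρ' ≥ r / (2 Dᵥ) ρ ≥ (1 + ε⁻¹) ρ`, so integrating `(ρ u²)' = ρ' u² + 2 ρ u u'` and absorbing
the cross term by AM-GM gives `∫_R^S ρ u² ≤ ρ(S) u(S)² + ε ∫_R^S ρ u'²`; as `∫ ρ u² < ∞`,
the boundary term is small for suitable `S → ∞`. On `(0, R]` the factor `e^{-r²/(4Dᵤ)}` is
bounded below, and Hölder with exponents `(q + 1) / 2` and `(q + 1) / (q - 1)` bounds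
`∫ ρ u²` by `(∫ ρ e^{-r²/(4Dᵤ)} |u|^{q+1})^{2/(q+1)} (∫_0^R ρ)^{(q-1)/(q+1)}`.
-/

lemma setLIntegral_Ioi_le_of_forall_Ioc_le {f : ℝ → ℝ≥0∞} {R : ℝ} {B : ℝ≥0∞}
    (hf : AEMeasurable f (volume.restrict (Ioi R))) (h : ∀ T, ∫⁻ r in Ioc R T, f r ≤ B) :
    ∫⁻ r in Ioi R, f r ≤ B := by
  rw [← (aecover_Iic tendsto_id).iSup_lintegral_eq_of_countably_generated hf]
  refine iSup_le fun T => ?_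
  rw [Measure.restrict_restrict measurableSet_Iic, Iic_inter_Ioi]
  exact h T

lemma frequently_atTop_le_of_setLIntegral_Ioi_ne_top {g : ℝ → ℝ} {a δ : ℝ} (hδ : 0 < δ)
    (hg : ∫⁻ r in Ioi a, ENNReal.ofReal (g r) ≠ ⊤) : ∃ᶠ r in atTop, g r ≤ δ := by
  intro hev
  obtain ⟨M, hM⟩ := eventually_atTop.1 hev
  refine hg (top_le_iff.1 ?_)
  calc ⊤ = ∫⁻ _ in Ioi (max a M), ENNReal.ofReal δ := by
        rw [setLIntegral_const, volume_Ioi, ENNReal.mul_top (by simpa using hδ)]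
    _ ≤ ∫⁻ r in Ioi (max a M), ENNReal.ofReal (g r) :=
        setLIntegral_mono' measurableSet_Ioi fun r hr =>
          ENNReal.ofReal_le_ofReal (not_le.1 (hM r (le_max_right a M |>.trans hr.le))).le
    _ ≤ ∫⁻ r in Ioi a, ENNReal.ofReal (g r) :=
        lintegral_mono_set (Ioi_subset_Ioi (le_max_left a M))

theorem integral_weight_mul_sq_le {w w' u u' : ℝ → ℝ} {R S c : ℝ} (hRS : R ≤ S) (hc : 0 < c)
    (hw : ∀ r ∈ Icc R S, HasDerivAt w (w' r) r) (hu : ∀ r ∈ Icc R S, HasDerivAt u (u' r) r)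
    (hw0 : ∀ r ∈ Icc R S, 0 ≤ w r) (hgrowth : ∀ r ∈ Icc R S, (1 + c) * w r ≤ w' r)
    (hint : IntervalIntegrable (fun r => w r * u' r ^ 2) volume R S) :
    ∫ r in R..S, w r * u r ^ 2 ≤ w S * u S ^ 2 + c⁻¹ * ∫ r in R..S, w r * u' r ^ 2 := by
  have hderiv : ∀ r ∈ Icc R S,
      HasDerivAt (fun r => w r * u r ^ 2) (w' r * u r ^ 2 + w r * (2 * u r * u' r)) r := by
    intro r hr
    refine ((hw r hr).mul ((hu r hr).pow 2)).congr_deriv ?_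
    simp only [Pi.pow_apply]
    ring
  have hcont : ContinuousOn (fun r => w r * u r ^ 2) (Icc R S) :=
    fun r hr => (hderiv r hr).continuousAt.continuousWithinAt
  have hint₀ : IntegrableOn (fun r => w r * u r ^ 2) (Icc R S) :=
    hcont.integrableOn_compact isCompact_Icc
  -- `2 u u' ≥ -c u² - c⁻¹ u'²` absorbs the cross term into the growth `w' ≥ (1 + c) w`.
  have hpt : ∀ r ∈ Ioo R S, w r * u r ^ 2 - c⁻¹ * (w r * u' r ^ 2)
      ≤ w' r * u r ^ 2 + w r * (2 * u r * u' r) := by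
    intro r hr
    have hr := Ioo_subset_Icc_self hr
    have hamgm : -(c * u r ^ 2) - c⁻¹ * u' r ^ 2 ≤ 2 * u r * u' r := by
      have := mul_nonneg (inv_pos.2 hc).le (sq_nonneg (c * u r + u' r))
      have hcc : c⁻¹ * c = 1 := inv_mul_cancel₀ hc.ne'
      nlinarith
    nlinarith [mul_le_mul_of_nonneg_left hamgm (hw0 r hr),
      mul_le_mul_of_nonneg_right (hgrowth r hr) (sq_nonneg (u r))]
  rw [intervalIntegrable_iff_integrableOn_Icc_of_le hRS] at hint
  have hftc := intervalIntegral.integral_le_sub_of_hasDeriv_right_of_le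
    (φ := fun r => w r * u r ^ 2 - c⁻¹ * (w r * u' r ^ 2)) hRS hcont
    (fun r hr => (hderiv r (Ioo_subset_Icc_self hr)).hasDerivWithinAt)
    (hint₀.sub (hint.const_mul c⁻¹)) hpt
  rw [intervalIntegral.integral_sub
      ((intervalIntegrable_iff_integrableOn_Icc_of_le hRS).2 hint₀)
      ((intervalIntegrable_iff_integrableOn_Icc_of_le hRS).2 (hint.const_mul c⁻¹)),
    intervalIntegral.integral_const_mul] at hftc
  nlinarith [mul_nonneg (hw0 R (left_mem_Icc.2 hRS)) (sq_nonneg (u R))]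

theorem setLIntegral_Ioc_weight_mul_sq_le {w w' u u' : ℝ → ℝ} {R S c : ℝ} (hRS : R ≤ S)
    (hc : 0 < c) (hw : ∀ r ∈ Icc R S, HasDerivAt w (w' r) r)
    (hu : ∀ r ∈ Icc R S, HasDerivAt u (u' r) r) (hw0 : ∀ r ∈ Icc R S, 0 ≤ w r)
    (hgrowth : ∀ r ∈ Icc R S, (1 + c) * w r ≤ w' r)
    (hint : IntegrableOn (fun r => w r * u' r ^ 2) (Ioc R S)) :
    ∫⁻ r in Ioc R S, ENNReal.ofReal (w r * u r ^ 2)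
      ≤ ENNReal.ofReal (w S * u S ^ 2)
        + ENNReal.ofReal c⁻¹ * ∫⁻ r in Ioc R S, ENNReal.ofReal (w r * u' r ^ 2) := by
  have key := integral_weight_mul_sq_le hRS hc hw hu hw0 hgrowth
    ((intervalIntegrable_iff_integrableOn_Ioc_of_le hRS).2 hint)
  rw [intervalIntegral.integral_of_le hRS, intervalIntegral.integral_of_le hRS] at key
  have hint₀ : IntegrableOn (fun r => w r * u r ^ 2) (Ioc R S) :=
    (ContinuousOn.integrableOn_Icc fun r hr =>
      ((hw r hr).continuousAt.mul ((hu r hr).continuousAt.pow 2)).continuousWithinAt).mono_set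
      Ioc_subset_Icc_self
  have hnonneg : ∀ f : ℝ → ℝ, 0 ≤ᵐ[volume.restrict (Ioc R S)] fun r => w r * f r ^ 2 :=
    fun f => (ae_restrict_iff' measurableSet_Ioc).2 <|
      ae_of_all _ fun r hr => mul_nonneg (hw0 r (Ioc_subset_Icc_self hr)) (sq_nonneg _)
  rw [← ofReal_integral_eq_lintegral_ofReal hint₀ (hnonneg u),
    ← ofReal_integral_eq_lintegral_ofReal hint (hnonneg u'),
    ← ENNReal.ofReal_mul (inv_nonneg.2 hc.le)]
  exact (ENNReal.ofReal_le_ofReal key).trans ENNReal.ofReal_add_le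

theorem setLIntegral_Ioi_weight_mul_sq_le {w w' u u' : ℝ → ℝ} {R c : ℝ} (hc : 0 < c)
    (hw : ∀ r ∈ Ici R, HasDerivAt w (w' r) r) (hu : ∀ r ∈ Ici R, HasDerivAt u (u' r) r)
    (hw0 : ∀ r ∈ Ici R, 0 ≤ w r) (hgrowth : ∀ r ∈ Ici R, (1 + c) * w r ≤ w' r)
    (hfin : ∫⁻ r in Ioi R, ENNReal.ofReal (w r * u r ^ 2) ≠ ⊤)
    (hfin' : ∫⁻ r in Ioi R, ENNReal.ofReal (w r * u' r ^ 2) ≠ ⊤) :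
    ∫⁻ r in Ioi R, ENNReal.ofReal (w r * u r ^ 2)
      ≤ ENNReal.ofReal c⁻¹ * ∫⁻ r in Ioi R, ENNReal.ofReal (w r * u' r ^ 2) := by
  have hwm : AEMeasurable w (volume.restrict (Ioi R)) :=
    ContinuousOn.aemeasurable (fun r hr =>
      (hw r (Ioi_subset_Ici_self hr)).continuousAt.continuousWithinAt) measurableSet_Ioi
  have hum : AEMeasurable u (volume.restrict (Ioi R)) :=
    ContinuousOn.aemeasurable (fun r hr =>
      (hu r (Ioi_subset_Ici_self hr)).continuousAt.continuousWithinAt) measurableSet_Ioi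
  have hu'm : AEMeasurable u' (volume.restrict (Ioi R)) :=
    (measurable_deriv u).aemeasurable.congr <| (ae_restrict_iff' measurableSet_Ioi).2 <|
      ae_of_all _ fun r hr => (hu r (Ioi_subset_Ici_self hr)).deriv
  have hint : IntegrableOn (fun r => w r * u' r ^ 2) (Ioi R) :=
    ⟨(hwm.mul (hu'm.pow_const 2)).aestronglyMeasurable,
      (hasFiniteIntegral_iff_ofReal <| (ae_restrict_iff' measurableSet_Ioi).2 <| ae_of_all _
        fun r hr => mul_nonneg (hw0 r (Ioi_subset_Ici_self hr)) (sq_nonneg _)).2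
        (lt_top_iff_ne_top.2 hfin')⟩
  refine ENNReal.le_of_forall_pos_le_add fun δ hδ _ => ?_
  refine setLIntegral_Ioi_le_of_forall_Ioc_le (hwm.mul (hum.pow_const 2)).ennreal_ofReal
    fun T => ?_
  obtain ⟨S, hS, hTS⟩ := ((frequently_atTop_le_of_setLIntegral_Ioi_ne_top
    (NNReal.coe_pos.2 hδ) hfin).and_eventually (eventually_ge_atTop (max T R))).exists
  have hRS : R ≤ S := (le_max_right T R).trans hTS
  have hIcc : Icc R S ⊆ Ici R := Icc_subset_Ici_self
  calc ∫⁻ r in Ioc R T, ENNReal.ofReal (w r * u r ^ 2)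
      ≤ ∫⁻ r in Ioc R S, ENNReal.ofReal (w r * u r ^ 2) :=
        lintegral_mono_set (Ioc_subset_Ioc_right ((le_max_left T R).trans hTS))
    _ ≤ ENNReal.ofReal (w S * u S ^ 2)
        + ENNReal.ofReal c⁻¹ * ∫⁻ r in Ioc R S, ENNReal.ofReal (w r * u' r ^ 2) :=
        setLIntegral_Ioc_weight_mul_sq_le hRS hc (fun r hr => hw r (hIcc hr))
          (fun r hr => hu r (hIcc hr)) (fun r hr => hw0 r (hIcc hr))
          (fun r hr => hgrowth r (hIcc hr)) (hint.mono_set Ioc_subset_Ioi_self)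
    _ ≤ δ + ENNReal.ofReal c⁻¹ * ∫⁻ r in Ioi R, ENNReal.ofReal (w r * u' r ^ 2) := by
        rw [← ENNReal.ofReal_coe_nnreal]
        gcongr
        exact Ioc_subset_Ioi_self
    _ = _ := add_comm _ _

theorem lintegral_mul_sq_le_rpow_mul_rpow {α : Type*} [MeasurableSpace α] {μ : Measure α}
    {w v u : α → ℝ} {p m : ℝ} (hp : 2 < p) (hm : 0 < m)
    (hwm : AEMeasurable w μ) (hvm : AEMeasurable v μ) (hum : AEMeasurable u μ)
    (hw : ∀ᵐ x ∂μ, 0 ≤ w x) (hv : ∀ᵐ x ∂μ, m ≤ v x) :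
    ∫⁻ x, ENNReal.ofReal (w x * u x ^ 2) ∂μ
      ≤ ENNReal.ofReal (m ^ (-(2 / p)))
        * (∫⁻ x, ENNReal.ofReal (w x * v x * |u x| ^ p) ∂μ) ^ (2 / p)
        * (∫⁻ x, ENNReal.ofReal (w x) ∂μ) ^ (1 - 2 / p) := by
  set θ := 2 / p with hθ
  have hθ0 : 0 ≤ θ := by positivity
  have hθ1 : θ ≤ 1 := (div_le_one (by linarith)).2 hp.le
  -- `(w v |u|^p)^θ w^(1-θ) = v^θ w u²`, and `v^θ ≥ m^θ`.
  have hpt : ∀ x, 0 ≤ w x → m ≤ v x → ENNReal.ofReal (w x * u x ^ 2)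
      ≤ ENNReal.ofReal (m ^ (-θ)) * (ENNReal.ofReal (w x * v x * |u x| ^ p) ^ θ
        * ENNReal.ofReal (w x) ^ (1 - θ)) := by
    intro x hwx hvx
    have hvx0 : 0 < v x := hm.trans_le hvx
    rw [ENNReal.ofReal_rpow_of_nonneg (by positivity) hθ0,
      ENNReal.ofReal_rpow_of_nonneg hwx (sub_nonneg.2 hθ1), ← ENNReal.ofReal_mul (by positivity),
      ← ENNReal.ofReal_mul (by positivity)]
    refine ENNReal.ofReal_le_ofReal ?_
    have hu2 : (|u x| ^ p) ^ θ = u x ^ 2 := by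
      rw [← rpow_mul (abs_nonneg _), hθ, mul_div_cancel₀ _ (by linarith), rpow_two, sq_abs]
    have hw1 : w x ^ θ * w x ^ (1 - θ) = w x := by
      rw [← rpow_add' hwx (by simp), add_sub_cancel, rpow_one]
    have hmv : 1 ≤ m ^ (-θ) * v x ^ θ := by
      rw [rpow_neg hm.le, inv_mul_eq_div, one_le_div (by positivity)]
      exact rpow_le_rpow hm.le hvx hθ0
    calc w x * u x ^ 2 ≤ m ^ (-θ) * v x ^ θ * (w x * u x ^ 2) :=
          le_mul_of_one_le_left (by positivity) hmv
      _ = m ^ (-θ) * v x ^ θ * (w x ^ θ * w x ^ (1 - θ) * u x ^ 2) := by rw [hw1]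
      _ = m ^ (-θ) * ((w x * v x * |u x| ^ p) ^ θ * w x ^ (1 - θ)) := by
          rw [mul_rpow (by positivity) (by positivity), mul_rpow hwx hvx0.le, hu2]
          ring
  calc ∫⁻ x, ENNReal.ofReal (w x * u x ^ 2) ∂μ
      ≤ ∫⁻ x, ENNReal.ofReal (m ^ (-θ)) * (ENNReal.ofReal (w x * v x * |u x| ^ p) ^ θ
          * ENNReal.ofReal (w x) ^ (1 - θ)) ∂μ :=
        lintegral_mono_ae <| by filter_upwards [hw, hv] with x hwx hvx using hpt x hwx hvx
    _ = ENNReal.ofReal (m ^ (-θ)) * ∫⁻ x, ENNReal.ofReal (w x * v x * |u x| ^ p) ^ θ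
          * ENNReal.ofReal (w x) ^ (1 - θ) ∂μ :=
        lintegral_const_mul' _ _ ENNReal.ofReal_ne_top
    _ ≤ _ := by
        rw [mul_assoc]
        gcongr
        exact ENNReal.lintegral_mul_norm_pow_le (by fun_prop) hwm.ennreal_ofReal hθ0
          (sub_nonneg.2 hθ1) (add_sub_cancel _ _)

noncomputable def radialGaussWeight (N : ℕ) (D r : ℝ) : ℝ := r ^ (N - 1) * exp (r ^ 2 / (4 * D))

namespace radialGaussWeight

variable {N : ℕ} {D r : ℝ}

theorem continuous : Continuous (radialGaussWeight N D) := by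
  unfold radialGaussWeight
  fun_prop

theorem pos (hr : 0 < r) : 0 < radialGaussWeight N D r := by
  unfold radialGaussWeight
  positivity

theorem nonneg (hr : 0 ≤ r) : 0 ≤ radialGaussWeight N D r := by
  unfold radialGaussWeight
  positivity

theorem monotoneOn (hD : 0 ≤ D) : MonotoneOn (radialGaussWeight N D) (Ici 0) := by
  intro r hr s hs hrs
  unfold radialGaussWeight
  gcongr
  exact pow_nonneg hs _

theorem hasDerivAt (N : ℕ) (D r : ℝ) :
    HasDerivAt (radialGaussWeight N D)
      ((N - 1 : ℕ) * r ^ (N - 1 - 1) * exp (r ^ 2 / (4 * D))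
        + r / (2 * D) * radialGaussWeight N D r) r := by
  refine ((hasDerivAt_pow (N - 1) r).mul
    (((hasDerivAt_pow 2 r).div_const (4 * D)).exp)).congr_deriv ?_
  unfold radialGaussWeight
  push_cast
  ring

end radialGaussWeight

theorem setLIntegral_Ioi_radialGaussWeight_mul_sq_le {N : ℕ} {D c R : ℝ} (hD : 0 < D)
    (hc : 0 < c) (hR : 2 * D * (1 + c) ≤ R) {u u' : ℝ → ℝ}
    (hu : ∀ r ∈ Ici R, HasDerivAt u (u' r) r)
    (hfin : ∫⁻ r in Ioi R, ENNReal.ofReal (radialGaussWeight N D r * u r ^ 2) ≠ ⊤)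
    (hfin' : ∫⁻ r in Ioi R, ENNReal.ofReal (radialGaussWeight N D r * u' r ^ 2) ≠ ⊤) :
    ∫⁻ r in Ioi R, ENNReal.ofReal (radialGaussWeight N D r * u r ^ 2)
      ≤ ENNReal.ofReal c⁻¹
        * ∫⁻ r in Ioi R, ENNReal.ofReal (radialGaussWeight N D r * u' r ^ 2) := by
  have hR0 : 0 ≤ R := le_trans (by positivity) hR
  refine setLIntegral_Ioi_weight_mul_sq_le hc (fun r _ => radialGaussWeight.hasDerivAt N D r) hu
    (fun r hr => radialGaussWeight.nonneg (hR0.trans hr)) (fun r hr => ?_) hfin hfin'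
  have hr0 : 0 ≤ r := hR0.trans hr
  have hc' : 1 + c ≤ r / (2 * D) := (le_div_iff₀ (by positivity)).2 (by linarith [hR.trans hr])
  calc (1 + c) * radialGaussWeight N D r ≤ r / (2 * D) * radialGaussWeight N D r :=
        mul_le_mul_of_nonneg_right hc' (radialGaussWeight.nonneg hr0)
    _ ≤ _ := le_add_of_nonneg_left (by positivity)

theorem setLIntegral_Ioc_radialGaussWeight_mul_sq_le {N : ℕ} {Dv Du q R : ℝ} (hDv : 0 ≤ Dv)
    (hDu : 0 < Du) (hq : 1 < q) (hR : 0 < R) {u : ℝ → ℝ} (hu : ContinuousOn u (Ioc 0 R)) :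
    ∫⁻ r in Ioc 0 R, ENNReal.ofReal (radialGaussWeight N Dv r * u r ^ 2)
      ≤ ENNReal.ofReal (exp (-R ^ 2 / (4 * Du)) ^ (-(2 / (q + 1)))
          * (radialGaussWeight N Dv R * R) ^ (1 - 2 / (q + 1)))
        * (∫⁻ r in Ioi 0, ENNReal.ofReal
            (radialGaussWeight N Dv r * exp (-r ^ 2 / (4 * Du)) * |u r| ^ (q + 1)))
          ^ (2 / (q + 1)) := by
  set ρ := radialGaussWeight N Dv
  have hholder := lintegral_mul_sq_le_rpow_mul_rpow (μ := volume.restrict (Ioc 0 R)) (w := ρ)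
    (v := fun r => exp (-r ^ 2 / (4 * Du))) (p := q + 1)
    (m := exp (-R ^ 2 / (4 * Du))) (by linarith) (exp_pos _)
    radialGaussWeight.continuous.aemeasurable (by fun_prop) (hu.aemeasurable measurableSet_Ioc)
    (ae_restrict_of_forall_mem measurableSet_Ioc fun r hr => radialGaussWeight.nonneg hr.1.le)
    (ae_restrict_of_forall_mem measurableSet_Ioc fun r hr => by
      gcongr
      exacts [hr.1.le, hr.2])
  have hρ : ∫⁻ r in Ioc 0 R, ENNReal.ofReal (ρ r) ≤ ENNReal.ofReal (ρ R * R) :=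
    calc ∫⁻ r in Ioc 0 R, ENNReal.ofReal (ρ r) ≤ ∫⁻ _ in Ioc 0 R, ENNReal.ofReal (ρ R) :=
          setLIntegral_mono' measurableSet_Ioc fun r hr =>
            ENNReal.ofReal_le_ofReal (radialGaussWeight.monotoneOn hDv hr.1.le hR.le hr.2)
      _ = ENNReal.ofReal (ρ R * R) := by
          rw [setLIntegral_const, volume_Ioc, sub_zero,
            ENNReal.ofReal_mul (radialGaussWeight.nonneg hR.le)]
  have hexp : 0 ≤ 1 - 2 / (q + 1) := sub_nonneg.2 ((div_le_one (by linarith)).2 (by linarith))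
  calc _ ≤ _ := hholder
    _ ≤ ENNReal.ofReal (exp (-R ^ 2 / (4 * Du)) ^ (-(2 / (q + 1))))
        * (∫⁻ r in Ioi 0, ENNReal.ofReal (ρ r * exp (-r ^ 2 / (4 * Du)) * |u r| ^ (q + 1)))
          ^ (2 / (q + 1))
        * ENNReal.ofReal (ρ R * R) ^ (1 - 2 / (q + 1)) := by
      gcongr
      exact Ioc_subset_Ioi_self
    _ = _ := by
      rw [ENNReal.ofReal_mul (rpow_nonneg (exp_pos _).le _),
        ← ENNReal.ofReal_rpow_of_nonneg (mul_nonneg (radialGaussWeight.nonneg hR.le) hR.le) hexp]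
      ring

theorem stmt11_general
    (N : ℕ) (Du Dv q : ℝ)
    (hDu : 0 < Du) (hDv : 0 < Dv) (hq : 1 < q)
    (ρ : ℝ → ℝ) (hρ : ∀ r : ℝ, ρ r = r ^ (N - 1) * Real.exp (r ^ 2 / (4 * Dv))) :
    ∀ ε > 0, ∃ C > 0, ∀ u du : ℝ → ℝ,
      (∀ r ∈ Ici (0:ℝ), HasDerivWithinAt u (du r) (Ici 0) r) →
      (∫⁻ r in Ioi (0:ℝ), ENNReal.ofReal (ρ r * u r ^ 2)) ≠ ⊤ →
      (∫⁻ r in Ioi (0:ℝ), ENNReal.ofReal (ρ r * du r ^ 2)) ≠ ⊤ →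
      (∫⁻ r in Ioi (0:ℝ), ENNReal.ofReal (ρ r * u r ^ 2))
        ≤ ENNReal.ofReal ε * (∫⁻ r in Ioi (0:ℝ), ENNReal.ofReal (ρ r * du r ^ 2))
          + ENNReal.ofReal C *
            (∫⁻ r in Ioi (0:ℝ),
                ENNReal.ofReal (ρ r * Real.exp (-(r ^ 2) / (4 * Du)) * |u r| ^ (q + 1)))
              ^ ((2 : ℝ) / (q + 1)) := by
  obtain rfl : ρ = radialGaussWeight N Dv := funext hρ
  intro ε hε
  set R := 2 * Dv * (1 + ε⁻¹)
  have hR : 0 < R := by positivity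
  refine ⟨exp (-R ^ 2 / (4 * Du)) ^ (-(2 / (q + 1)))
    * (radialGaussWeight N Dv R * R) ^ (1 - 2 / (q + 1)),
    by have := radialGaussWeight.pos (N := N) (D := Dv) hR; positivity, ?_⟩
  intro u du hu hfin hfin'
  have hIoi : Ioi R ⊆ Ioi 0 := Ioi_subset_Ioi hR.le
  have hderiv : ∀ r ∈ Ici R, HasDerivAt u (du r) r := fun r hr =>
    (hu r (hR.le.trans hr)).hasDerivAt (Ici_mem_nhds (hR.trans_le hr))
  have htail := setLIntegral_Ioi_radialGaussWeight_mul_sq_le (R := R) hDv (inv_pos.2 hε) le_rfl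
    hderiv (ne_top_of_le_ne_top hfin (lintegral_mono_set hIoi))
    (ne_top_of_le_ne_top hfin' (lintegral_mono_set hIoi))
  have hcont : ContinuousOn u (Ici 0) := fun r hr => (hu r hr).continuousWithinAt
  have hhead := setLIntegral_Ioc_radialGaussWeight_mul_sq_le (N := N) hDv.le hDu hq hR
    (hcont.mono fun r hr => hr.1.le)
  rw [inv_inv] at htail
  have hsplit := lintegral_union (μ := volume)
    (f := fun r => ENNReal.ofReal (radialGaussWeight N Dv r * u r ^ 2))
    measurableSet_Ioi (Ioc_disjoint_Ioi_same (a := 0) (b := R))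
  rw [Ioc_union_Ioi_eq_Ioi hR.le] at hsplit
  rw [hsplit, add_comm]
  exact add_le_add (htail.trans (by gcongr)) hhead

/-- Weighted interpolation inequality with weight
`ρ(r) = r^{N-1} e^{r²/(4Dᵥ)}`: for every `ε > 0` there is `C_ε > 0` such that every
C¹ function `u` on `[0,∞)` with `∫ ρ u² < ∞` and `∫ ρ (u')² < ∞` satisfies
`∫ ρ u² ≤ ε ∫ ρ (u')² + C_ε (∫ ρ e^{−r²/(4Dᵤ)} |u|^{q+1})^{2/(q+1)}`. -/
theorem stmt11
    (N : ℕ) (hN : 1 ≤ N) (Du Dv q : ℝ)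
    (hDu : 0 < Du) (hDv : 0 < Dv) (hq : 1 < q)
    (ρ : ℝ → ℝ) (hρ : ∀ r : ℝ, ρ r = r ^ (N - 1) * Real.exp (r ^ 2 / (4 * Dv))) :
    ∀ ε > 0, ∃ C > 0, ∀ u du : ℝ → ℝ,
      (∀ r ∈ Ici (0:ℝ), HasDerivWithinAt u (du r) (Ici 0) r) →
      (∫⁻ r in Ioi (0:ℝ), ENNReal.ofReal (ρ r * u r ^ 2)) ≠ ⊤ →
      (∫⁻ r in Ioi (0:ℝ), ENNReal.ofReal (ρ r * du r ^ 2)) ≠ ⊤ →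
      (∫⁻ r in Ioi (0:ℝ), ENNReal.ofReal (ρ r * u r ^ 2))
        ≤ ENNReal.ofReal ε * (∫⁻ r in Ioi (0:ℝ), ENNReal.ofReal (ρ r * du r ^ 2))
          + ENNReal.ofReal C *
            (∫⁻ r in Ioi (0:ℝ),
                ENNReal.ofReal (ρ r * Real.exp (-(r ^ 2) / (4 * Du)) * |u r| ^ (q + 1)))
              ^ ((2 : ℝ) / (q + 1)) :=
  stmt11_general N Du Dv q hDu hDv hq ρ hρ
end

section
/- Let N ≥ 1 be an integer, D_u, D_v, λ > 0, κ < −N/2, 1 < q < (N+2)/(N−2) when N ≥ 3 (and q > 1 arbitrary when N ≤ 2), and set ρ(r) = r^{N−1} e^{r²/(4D_v)}. Suppose φ : [0,∞) → ℝ is a positive C² solution of D_v (ρ φ')' = κ ρ φ + λ ρ e^{−r²/(4D_u)} φ^q on (0,∞) with φ(0) = 1, φ'(0) = 0, satisfying ∫₀^∞ ρ(r) φ(r)² dr < ∞ and ∫₀^∞ ρ(r) φ'(r)² dr < ∞. Then lim_{r→∞} ρ(r) φ(r)² = 0; in particular φ(r) = o(ρ(r)^{−1/2}) as r → ∞. 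-/
open Real Set Filter MeasureTheory Asymptotics
open scoped Topology

/-!
With `g = ρ φ²` and `ρ` nondecreasing, `g' = ρ' φ² + 2 ρ φ φ' ≥ -(ρ φ² + ρ φ'²)`, and the right-hand
side is integrable because `φ ∈ W^{1,2}_ρ`. Hence `g x ≤ g b + ∫_x^b (ρ φ² + ρ φ'²)` for `x ≤ b`.
Since `g ≥ 0` is integrable, `g b` is small for arbitrarily large `b`, while the integral is a small
tail, so `g → 0`.
-/

theorem frequently_norm_lt_of_integrableOn_Ioi {g : ℝ → ℝ} {a ε : ℝ}
    (hg : IntegrableOn g (Ioi a)) (hε : 0 < ε) : ∃ᶠ x in atTop, ‖g x‖ < ε := by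
  rw [frequently_atTop]
  intro x
  by_contra! hge
  have hconst : IntegrableOn (fun _ ↦ ε) (Ioi (max a x)) := by
    refine (hg.mono_set (Ioi_subset_Ioi (le_max_left a x))).norm.mono'
      aestronglyMeasurable_const ?_
    filter_upwards [ae_restrict_mem measurableSet_Ioi] with t ht
    rw [Real.norm_of_nonneg hε.le]
    exact hge t ((le_max_right a x).trans ht.le)
  simp [integrableOn_const_iff, hε.ne'] at hconst

theorem tendsto_atTop_zero_of_integrableOn_of_neg_le_deriv {g g' f : ℝ → ℝ} {a : ℝ}
    (hg_nonneg : ∀ x ∈ Ioi a, 0 ≤ g x) (hg : IntegrableOn g (Ioi a))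
    (hderiv : ∀ x ∈ Ioi a, HasDerivAt g (g' x) x)
    (hf : IntegrableOn f (Ioi a)) (hf_le : ∀ x ∈ Ioi a, -f x ≤ g' x) :
    Tendsto g atTop (𝓝 0) := by
  have hdecay : ∀ x b, a < x → x ≤ b → g x ≤ g b + ∫ t in x..b, f t := by
    intro x b hx hxb
    have hsub : Icc x b ⊆ Ioi a := fun t ht ↦ hx.trans_le ht.1
    have := intervalIntegral.sub_le_integral_of_hasDeriv_right_of_le (g := fun t ↦ -g t) hxb
      (fun t ht ↦ (hderiv t (hsub ht)).continuousAt.neg.continuousWithinAt)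
      (fun t ht ↦ (hderiv t (hsub (Ioo_subset_Icc_self ht))).neg.hasDerivWithinAt)
      (hf.mono_set hsub) (fun t ht ↦ neg_le.1 (hf_le t (hsub (Ioo_subset_Icc_self ht))))
    linarith
  have hF := intervalIntegral_tendsto_integral_Ioi a hf tendsto_id
  refine tendsto_order.2 ⟨fun ε hε ↦ ?_, fun ε hε ↦ ?_⟩
  · filter_upwards [eventually_gt_atTop a] with x hx
    exact hε.trans_le (hg_nonneg x hx)
  obtain ⟨X, hX⟩ := eventually_atTop.1 <| (eventually_gt_atTop a).and <|
    (Metric.tendsto_nhds.1 hF) (ε / 3) (by positivity)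
  filter_upwards [eventually_ge_atTop X] with x hx
  obtain ⟨b, hxb, hgb⟩ := frequently_atTop.1 (frequently_norm_lt_of_integrableOn_Ioi hg
    (show 0 < ε / 3 by positivity)) x
  obtain ⟨hax, hFx⟩ := hX x hx
  have hFb := (hX b (hx.trans hxb)).2
  have hint : ∀ y, a ≤ y → IntervalIntegrable f volume a y := fun y hy ↦
    (intervalIntegrable_iff_integrableOn_Ioc_of_le hy).2 (hf.mono_set Ioc_subset_Ioi_self)
  have hxb_int : ∫ t in x..b, f t = (∫ t in a..b, f t) - ∫ t in a..x, f t :=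
    (intervalIntegral.integral_interval_sub_left (hint b (hax.le.trans hxb)) (hint x hax.le)).symm
  have := hdecay x b hax hxb
  rw [Real.norm_eq_abs, abs_lt] at hgb
  rw [Real.dist_eq, abs_lt] at hFx hFb
  simp only [id] at hFx hFb
  linarith

theorem tendsto_mul_sq_atTop_zero_of_monotoneOn {ρ φ dφ : ℝ → ℝ} {a : ℝ}
    (hρ_mono : MonotoneOn ρ (Ioi a)) (hρ_diff : ∀ x ∈ Ioi a, DifferentiableAt ℝ ρ x)
    (hρ_nonneg : ∀ x ∈ Ioi a, 0 ≤ ρ x) (hφ : ∀ x ∈ Ioi a, HasDerivAt φ (dφ x) x)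
    (h₁ : IntegrableOn (fun x ↦ ρ x * φ x ^ 2) (Ioi a))
    (h₂ : IntegrableOn (fun x ↦ ρ x * dφ x ^ 2) (Ioi a)) :
    Tendsto (fun x ↦ ρ x * φ x ^ 2) atTop (𝓝 0) := by
  refine tendsto_atTop_zero_of_integrableOn_of_neg_le_deriv
    (g' := fun x ↦ deriv ρ x * φ x ^ 2 + ρ x * (2 * φ x * dφ x))
    (fun x hx ↦ mul_nonneg (hρ_nonneg x hx) (sq_nonneg _)) h₁ (fun x hx ↦ ?_) (h₁.add h₂)
    (fun x hx ↦ ?_)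
  · exact ((hρ_diff x hx).hasDerivAt.mul ((hφ x hx).pow 2)).congr_deriv
      (by rw [Pi.pow_apply]; push_cast; ring)
  · have hρ' : 0 ≤ deriv ρ x :=
      (hρ_diff x hx).hasDerivAt.hasDerivWithinAt.nonneg_of_monotoneOn
        (accPt_principal_iff_nhdsWithin.2 ?_) hρ_mono
    · have hsq := mul_nonneg (hρ_nonneg x hx) (sq_nonneg (φ x + dφ x))
      simp only [Pi.add_apply]
      nlinarith [mul_nonneg hρ' (sq_nonneg (φ x))]
    · rw [Set.sdiff_eq, nhdsWithin_inter_of_mem (mem_nhdsWithin_of_mem_nhds (Ioi_mem_nhds hx))]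
      infer_instance

theorem isLittleO_rpow_neg_half_of_tendsto_mul_sq {ρ φ : ℝ → ℝ}
    (hρ : ∀ᶠ x in atTop, 0 < ρ x) (h : Tendsto (fun x ↦ ρ x * φ x ^ 2) atTop (𝓝 0)) :
    φ =o[atTop] fun x ↦ ρ x ^ (-(1 : ℝ) / 2) := by
  rw [isLittleO_iff_tendsto' (hρ.mono fun x hx h0 ↦ absurd h0 (rpow_pos_of_pos hx _).ne'),
    tendsto_zero_iff_norm_tendsto_zero]
  have := (continuous_sqrt.tendsto 0).comp h
  rw [sqrt_zero] at this
  refine this.congr' ?_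
  filter_upwards [hρ] with x hx
  rw [Function.comp_apply, sqrt_mul hx.le, sqrt_sq_eq_abs, norm_div, Real.norm_eq_abs,
    Real.norm_of_nonneg (rpow_nonneg hx.le _), neg_div, rpow_neg hx.le, div_inv_eq_mul,
    sqrt_eq_rpow, mul_comm]

theorem stmt12_general
    (N : ℕ) (Dv : ℝ)
    (hDv : 0 < Dv)
    (ρ : ℝ → ℝ) (hρ : ∀ r : ℝ, ρ r = r ^ (N - 1) * Real.exp (r ^ 2 / (4 * Dv)))
    (φ dφ : ℝ → ℝ)
    (hφ' : ∀ r ∈ Ici (0:ℝ), HasDerivWithinAt φ (dφ r) (Ici 0) r)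
    (hint₁ : IntegrableOn (fun r => ρ r * φ r ^ 2) (Ioi 0))
    (hint₂ : IntegrableOn (fun r => ρ r * dφ r ^ 2) (Ioi 0)) :
    Tendsto (fun r => ρ r * φ r ^ 2) atTop (nhds 0) ∧
      φ =o[atTop] fun r => ρ r ^ (-(1 : ℝ) / 2) := by
  have hρ_pos : ∀ r ∈ Ioi (0 : ℝ), 0 < ρ r := fun r hr ↦ by
    rw [hρ]
    exact mul_pos (pow_pos hr _) (exp_pos _)
  have hρ_mono : MonotoneOn ρ (Ioi 0) := fun x hx y hy hxy ↦ by
    rw [hρ, hρ]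
    exact mul_le_mul (pow_le_pow_left₀ (le_of_lt hx) hxy _)
      (exp_le_exp.2 (by gcongr; exact le_of_lt hx)) (exp_pos _).le (pow_nonneg (le_of_lt hy) _)
  have hρ_diff : ∀ r ∈ Ioi (0 : ℝ), DifferentiableAt ℝ ρ r := fun r _ ↦ by
    rw [funext hρ]
    fun_prop
  have hφ : ∀ r ∈ Ioi (0 : ℝ), HasDerivAt φ (dφ r) r := fun r hr ↦
    (hφ' r (mem_Ici.2 (le_of_lt hr))).hasDerivAt (Ici_mem_nhds hr)
  have hdecay := tendsto_mul_sq_atTop_zero_of_monotoneOn hρ_mono hρ_diff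
    (fun r hr ↦ (hρ_pos r hr).le) hφ hint₁ hint₂
  exact ⟨hdecay, isLittleO_rpow_neg_half_of_tendsto_mul_sq
    ((eventually_gt_atTop 0).mono hρ_pos) hdecay⟩

/-- If `κ < −N/2`, `1 < q` (with `q < (N+2)/(N−2)` when `N ≥ 3`), and
`φ` is a positive C² solution of the profile equation belonging to the weighted Sobolev
space `W¹²_ρ(0,∞)` (i.e. `∫ ρ φ² < ∞` and `∫ ρ (φ')² < ∞`), then `ρ(r) φ(r)² → 0` as
`r → ∞`; in particular `φ(r) = o(ρ(r)^{−1/2})`. -/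
theorem stmt12
    (N : ℕ) (hN : 1 ≤ N) (Du Dv lam q κ : ℝ)
    (hDu : 0 < Du) (hDv : 0 < Dv) (hlam : 0 < lam)
    (hκ : κ < -(N : ℝ) / 2) (hq : 1 < q)
    (hq' : 3 ≤ N → q < ((N : ℝ) + 2) / ((N : ℝ) - 2))
    (ρ : ℝ → ℝ) (hρ : ∀ r : ℝ, ρ r = r ^ (N - 1) * Real.exp (r ^ 2 / (4 * Dv)))
    (φ dφ : ℝ → ℝ)
    (hpos : ∀ r ∈ Ici (0:ℝ), 0 < φ r)
    (hφ' : ∀ r ∈ Ici (0:ℝ), HasDerivWithinAt φ (dφ r) (Ici 0) r)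
    (hODE : ∀ r ∈ Ioi (0:ℝ), HasDerivAt (fun s => Dv * (ρ s * dφ s))
      (κ * ρ r * φ r + lam * ρ r * Real.exp (-(r ^ 2) / (4 * Du)) * φ r ^ q) r)
    (hφ0 : φ 0 = 1) (hdφ0 : dφ 0 = 0)
    (hint₁ : IntegrableOn (fun r => ρ r * φ r ^ 2) (Ioi 0))
    (hint₂ : IntegrableOn (fun r => ρ r * dφ r ^ 2) (Ioi 0)) :
    Tendsto (fun r => ρ r * φ r ^ 2) atTop (nhds 0) ∧
      φ =o[atTop] fun r => ρ r ^ (-(1 : ℝ) / 2) :=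
  stmt12_general N Dv hDv ρ hρ φ dφ hφ' hint₁ hint₂
end

section
/- Let N ≥ 1 be an integer, D_u, D_v, λ > 0, q ≥ 1 and κ ≥ −N/2, and set ρ(r) = r^{N−1} e^{r²/(4D_v)}. Let φ : [0,∞) → ℝ be a positive C² solution of D_v (ρ φ')' = κ ρ φ + λ ρ e^{−r²/(4D_u)} φ^q on (0,∞) with φ(0) = 1, φ'(0) = 0, and assume there exist C > 0 and m > 0 with φ(r) ≤ C (1+r)^m for all r ≥ 0. Then for every η > 2κ, the function g_η(r) = r^{−η} φ(r) is decreasing for all sufficiently large r and lim_{r→∞} r^{−η} φ(r) = 0. -/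
/-!
Put `G = r^{-η} φ` and `H = ρ r^{2η} G'`. The equation gives
`H' = ρ r^{η-2} (r² ((κ - η/2) φ + λ e^{-r²/4D_u} φ^q) / D_v - η (η + N - 2) φ)`.
Since `κ - η/2 < 0` and the growth bound makes `λ e^{-r²/4D_u} φ^{q-1}` tend to `0`,
eventually `H' ≤ -ε ρ r^{2η} G < 0`.

If `G ≥ c > 0` for large `r`, then `H' ≤ -c ε ρ r^{2η}`, which is eventually at most `-c ε`
times the derivative of `D_v ρ r^{2η-1}`; so `H ≲ -c ε D_v ρ r^{2η-1}` and
`G' = H / (ρ r^{2η}) ≲ -c ε D_v / r`, which drives `G` to `-∞`. So `G` is not eventually bounded below by any `c > 0`.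
As `H` is eventually strictly decreasing, `H ≥ 0` for ever would make `G` nondecreasing;
hence `H`, and with it `G'`, is eventually negative, and the decreasing positive `G` tends to `0`.
-/

open Real Set Filter Topology

lemma antitoneOn_Ici_of_deriv_nonpos {f : ℝ → ℝ} {a : ℝ}
    (hf : ∀ x ∈ Ici a, DifferentiableAt ℝ f x) (hf' : ∀ x ∈ Ioi a, deriv f x ≤ 0) :
    AntitoneOn f (Ici a) :=
  antitoneOn_of_deriv_nonpos (convex_Ici a)
    (fun x hx => (hf x hx).continuousAt.continuousWithinAt)
    (by
      rw [interior_Ici]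
      exact fun x hx => (hf x (Ioi_subset_Ici_self hx)).differentiableWithinAt)
    (by rwa [interior_Ici])

lemma monotoneOn_Ici_of_deriv_nonneg {f : ℝ → ℝ} {a : ℝ}
    (hf : ∀ x ∈ Ici a, DifferentiableAt ℝ f x) (hf' : ∀ x ∈ Ioi a, 0 ≤ deriv f x) :
    MonotoneOn f (Ici a) :=
  monotoneOn_of_deriv_nonneg (convex_Ici a)
    (fun x hx => (hf x hx).continuousAt.continuousWithinAt)
    (by
      rw [interior_Ici]
      exact fun x hx => (hf x (Ioi_subset_Ici_self hx)).differentiableWithinAt)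
    (by rwa [interior_Ici])

lemma strictAntiOn_Ici_of_deriv_neg {f : ℝ → ℝ} {a : ℝ}
    (hf : ∀ x ∈ Ici a, DifferentiableAt ℝ f x) (hf' : ∀ x ∈ Ioi a, deriv f x < 0) :
    StrictAntiOn f (Ici a) :=
  strictAntiOn_of_deriv_neg (convex_Ici a)
    (fun x hx => (hf x hx).continuousAt.continuousWithinAt)
    (by rwa [interior_Ici])

lemma tendsto_atBot_of_deriv_le_neg_div {f : ℝ → ℝ} {δ : ℝ} (hδ : 0 < δ)
    (hf : ∀ᶠ x in atTop, DifferentiableAt ℝ f x) (hf' : ∀ᶠ x in atTop, deriv f x ≤ -δ / x) :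
    Tendsto f atTop atBot := by
  obtain ⟨R, hR⟩ := eventually_atTop.1 ((hf.and hf').and (eventually_gt_atTop 0))
  have hderiv : ∀ x ∈ Ici R, HasDerivAt (fun x => f x + δ * log x) (deriv f x + δ * x⁻¹) x :=
    fun x hx => (hR x hx).1.1.hasDerivAt.add ((hasDerivAt_log (hR x hx).2.ne').const_mul δ)
  have hanti : AntitoneOn (fun x => f x + δ * log x) (Ici R) :=
    antitoneOn_Ici_of_deriv_nonpos (fun x hx => (hderiv x hx).differentiableAt) fun x hx => by
      rw [(hderiv x (Ioi_subset_Ici_self hx)).deriv]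
      have hfx := (hR x (le_of_lt hx)).1.2
      rw [neg_div, div_eq_mul_inv] at hfx
      linarith
  have hlog : Tendsto (fun x => f R + δ * log R - δ * log x) atTop atBot :=
    tendsto_atBot_add_const_left _ _
      (tendsto_neg_atTop_atBot.comp (tendsto_log_atTop.const_mul_atTop hδ))
  refine tendsto_atBot_mono' atTop (eventually_atTop.2 ⟨R, fun x hx => ?_⟩) hlog
  have hRx := hanti self_mem_Ici hx hx
  simp only at hRx
  linarith

lemma tendsto_zero_of_antitoneOn_of_not_eventually_le {f : ℝ → ℝ} {a : ℝ}
    (hanti : AntitoneOn f (Ici a)) (hpos : ∀ᶠ x in atTop, 0 ≤ f x)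
    (hsmall : ∀ c > 0, ¬ ∀ᶠ x in atTop, c ≤ f x) : Tendsto f atTop (𝓝 0) := by
  refine tendsto_order.2 ⟨fun c hc => hpos.mono fun x hx => hc.trans_le hx, fun c hc => ?_⟩
  obtain ⟨x, hax, hx⟩ := frequently_atTop.1 (not_eventually.1 (hsmall c hc)) a
  refine eventually_atTop.2 ⟨x, fun y hxy => ?_⟩
  exact (hanti hax (hax.trans hxy) hxy).trans_lt (not_le.1 hx)

noncomputable def gaussianWeight (k : ℕ) (D r : ℝ) : ℝ := r ^ k * exp (r ^ 2 / (4 * D))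

lemma gaussianWeight_pos (k : ℕ) (D : ℝ) {r : ℝ} (hr : 0 < r) : 0 < gaussianWeight k D r := by
  unfold gaussianWeight; positivity

lemma hasDerivAt_gaussianWeight (k : ℕ) (D : ℝ) {r : ℝ} (hr : r ≠ 0) :
    HasDerivAt (gaussianWeight k D) (gaussianWeight k D r * (k / r + r / (2 * D))) r := by
  refine ((hasDerivAt_pow k r).mul ((hasDerivAt_pow 2 r).div_const (4 * D)).exp).congr_deriv ?_
  unfold gaussianWeight
  cases k with
  | zero => simp; ring
  | succ j => rw [Nat.add_sub_cancel]; field_simp; ring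

lemma tendsto_gaussianWeight_mul_rpow_atTop (k : ℕ) {D : ℝ} (hD : 0 < D) (a : ℝ) :
    Tendsto (fun r => gaussianWeight k D r * r ^ a) atTop atTop := by
  refine tendsto_atTop_mono' atTop ?_
    (tendsto_exp_mul_div_rpow_atTop (-a) (1 / (4 * D)) (by positivity))
  filter_upwards [eventually_ge_atTop 1] with r hr
  rw [rpow_neg (by linarith), div_inv_eq_mul, gaussianWeight]
  gcongr
  calc exp (1 / (4 * D) * r) ≤ 1 * exp (r ^ 2 / (4 * D)) := by
        rw [one_mul, div_mul_eq_mul_div, one_mul]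
        gcongr
        nlinarith
    _ ≤ r ^ k * exp (r ^ 2 / (4 * D)) := by gcongr; exact one_le_pow₀ hr

lemma hasDerivAt_gaussianWeight_mul_rpow (k : ℕ) (D a : ℝ) {r : ℝ} (hr : 0 < r) :
    HasDerivAt (fun s => gaussianWeight k D s * s ^ a)
      (gaussianWeight k D r * r ^ a * ((k + a) / r + r / (2 * D))) r := by
  refine ((hasDerivAt_gaussianWeight k D hr.ne').mul
    (hasDerivAt_rpow_const (Or.inl hr.ne'))).congr_deriv ?_
  rw [rpow_sub_one hr.ne']
  field_simp
  ring

lemma eventually_mul_deriv_gaussianWeight_mul_rpow_le (k : ℕ) {D : ℝ} (hD : 0 < D) (a : ℝ) :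
    ∀ᶠ r in atTop, D * deriv (fun s => gaussianWeight k D s * s ^ a) r
      ≤ r * (gaussianWeight k D r * r ^ a) := by
  filter_upwards [eventually_gt_atTop 0,
    (tendsto_pow_atTop two_ne_zero).eventually_ge_atTop (2 * D * (k + a))] with r hr hr2
  have hW : 0 < gaussianWeight k D r * r ^ a :=
    mul_pos (gaussianWeight_pos k D hr) (rpow_pos_of_pos hr a)
  rw [(hasDerivAt_gaussianWeight_mul_rpow k D a hr).deriv]
  calc D * (gaussianWeight k D r * r ^ a * ((k + a) / r + r / (2 * D)))
      = gaussianWeight k D r * r ^ a * (D * (k + a) / r + r / 2) := by field_simp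
    _ ≤ gaussianWeight k D r * r ^ a * r := by
        gcongr
        rw [div_add_div _ _ hr.ne' two_ne_zero, div_le_iff₀ (by positivity)]
        nlinarith
    _ = r * (gaussianWeight k D r * r ^ a) := by ring

lemma tendsto_exp_neg_sq_div_mul_one_add_rpow {D : ℝ} (hD : 0 < D) (P : ℝ) :
    Tendsto (fun r => exp (-(r ^ 2) / D) * (1 + r) ^ P) atTop (𝓝 0) := by
  have h := (tendsto_rpow_mul_exp_neg_mul_atTop_nhds_zero P (1 / D) (by positivity)).comp
    (tendsto_atTop_add_const_left _ 1 tendsto_id)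
  refine squeeze_zero' ((eventually_ge_atTop 0).mono fun r hr => by positivity) ?_ h
  filter_upwards [eventually_ge_atTop 2] with r hr
  rw [mul_comm]
  simp only [Function.comp, id]
  gcongr
  rw [neg_div, neg_mul, neg_le_neg_iff, div_mul_eq_mul_div, one_mul]
  gcongr
  nlinarith

lemma eventually_mul_exp_neg_sq_div_mul_rpow_le {φ : ℝ → ℝ} {lam D q C m δ : ℝ} (hD : 0 < D)
    (hq : 1 ≤ q) (hδ : 0 < δ) (hφ : ∀ᶠ r in atTop, 0 < φ r)
    (hgrowth : ∀ᶠ r in atTop, φ r ≤ C * (1 + r) ^ m) :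
    ∀ᶠ r in atTop, lam * exp (-(r ^ 2) / D) * φ r ^ q ≤ δ * φ r := by
  have hlim := (tendsto_exp_neg_sq_div_mul_one_add_rpow hD (m * (q - 1))).const_mul
    (|lam| * |C| ^ (q - 1))
  rw [mul_zero] at hlim
  filter_upwards [(tendsto_order.1 hlim).2 δ hδ, hφ, hgrowth, eventually_ge_atTop 0]
    with r hsmall hφr hgr hr
  have hpow : φ r ^ (q - 1) ≤ |C| ^ (q - 1) * (1 + r) ^ (m * (q - 1)) :=
    calc φ r ^ (q - 1) ≤ (|C| * (1 + r) ^ m) ^ (q - 1) :=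
          rpow_le_rpow hφr.le (hgr.trans (by gcongr; exact le_abs_self C)) (by linarith)
      _ = |C| ^ (q - 1) * (1 + r) ^ (m * (q - 1)) := by
          rw [mul_rpow (abs_nonneg C) (by positivity), ← rpow_mul (by linarith)]
  have hcoef : lam * exp (-(r ^ 2) / D) * φ r ^ (q - 1) ≤ δ :=
    calc lam * exp (-(r ^ 2) / D) * φ r ^ (q - 1)
        ≤ |lam| * exp (-(r ^ 2) / D) * (|C| ^ (q - 1) * (1 + r) ^ (m * (q - 1))) := by
          gcongr
          exact le_abs_self lam
      _ = |lam| * |C| ^ (q - 1) * (exp (-(r ^ 2) / D) * (1 + r) ^ (m * (q - 1))) := by ring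
      _ ≤ δ := hsmall.le
  calc lam * exp (-(r ^ 2) / D) * φ r ^ q = lam * exp (-(r ^ 2) / D) * φ r ^ (q - 1) * φ r := by
        rw [rpow_sub_one hφr.ne']; field_simp
    _ ≤ δ * φ r := mul_le_mul_of_nonneg_right hcoef hφr.le

/-- `ρ r^{2η} (r^{-η} φ)'`, written so that `φ'` enters only through the flux `ρ φ'`,
whose derivative the equation provides. -/
noncomputable def profileFlux (ρ φ dφ : ℝ → ℝ) (η r : ℝ) : ℝ :=
  r ^ η * (ρ r * dφ r) - η * (r ^ (η - 1) * (ρ r * φ r))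

lemma hasDerivAt_rpow_neg_mul {ρ φ dφ : ℝ → ℝ} {η r : ℝ} (hr : 0 < r) (hρ : ρ r ≠ 0)
    (hφ : HasDerivAt φ (dφ r) r) :
    HasDerivAt (fun s => s ^ (-η) * φ s)
      (profileFlux ρ φ dφ η r / (r * (ρ r * r ^ (2 * η - 1)))) r := by
  refine ((hasDerivAt_rpow_const (Or.inl hr.ne')).mul hφ).congr_deriv ?_
  have e : r ^ (2 * η - 1) = (r ^ η) ^ 2 / r := by
    rw [rpow_sub_one hr.ne', mul_comm, rpow_mul hr.le, rpow_two]
  rw [profileFlux, e, rpow_sub_one hr.ne', rpow_sub_one hr.ne', rpow_neg hr.le]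
  field_simp
  ring

lemma hasDerivAt_profileFlux {ρ φ dφ : ℝ → ℝ} {Dv b η s r : ℝ} (hr : 0 < r) (hDv : Dv ≠ 0)
    (hρ : HasDerivAt ρ (ρ r * (b / r + r / (2 * Dv))) r) (hφ : HasDerivAt φ (dφ r) r)
    (hflux : HasDerivAt (fun s => Dv * (ρ s * dφ s)) (ρ r * s) r) :
    HasDerivAt (profileFlux ρ φ dφ η)
      (ρ r * r ^ (η - 2) * (r ^ 2 * (s - η / 2 * φ r) / Dv - η * (η + b - 1) * φ r)) r := by
  have hρdφ : HasDerivAt (fun s => ρ s * dφ s) (ρ r * s / Dv) r := by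
    simpa [hDv, div_eq_inv_mul] using hflux.const_mul Dv⁻¹
  refine (((hasDerivAt_rpow_const (p := η) (Or.inl hr.ne')).mul hρdφ).sub
    (((hasDerivAt_rpow_const (p := η - 1) (Or.inl hr.ne')).mul (hρ.mul hφ)).const_mul η))
    |>.congr_deriv ?_
  simp only [sub_sub, one_add_one_eq_two, rpow_sub hr, rpow_one, rpow_two, Pi.mul_apply]
  field_simp
  ring

lemma deriv_profileFlux_le {ρ φ dφ : ℝ → ℝ} {Dv b η s a r : ℝ} (hr : 0 < r) (hDv : 0 < Dv)
    (ha : 0 < a) (hρ_pos : 0 < ρ r) (hφ_pos : 0 < φ r)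
    (hρ : HasDerivAt ρ (ρ r * (b / r + r / (2 * Dv))) r) (hφ : HasDerivAt φ (dφ r) r)
    (hflux : HasDerivAt (fun s => Dv * (ρ s * dφ s)) (ρ r * s) r)
    (hs : s - η / 2 * φ r ≤ -a * φ r) (hr2 : -(η * (η + b - 1)) * (2 * Dv / a) ≤ r ^ 2) :
    deriv (profileFlux ρ φ dφ η) r
      ≤ -(a / (2 * Dv)) * (r * (ρ r * r ^ (2 * η - 1))) * (r ^ (-η) * φ r) := by
  have e : r * (ρ r * r ^ (2 * η - 1)) * (r ^ (-η) * φ r)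
      = ρ r * r ^ (η - 2) * (r ^ 2 * φ r) := by
    rw [rpow_sub_one hr.ne', mul_comm 2 η, rpow_mul hr.le, rpow_two, rpow_sub hr, rpow_two,
      rpow_neg hr.le]
    field_simp
  rw [(hasDerivAt_profileFlux hr hDv.ne' hρ hφ hflux).deriv, mul_assoc (-(a / (2 * Dv))), e,
    mul_left_comm]
  have hr2' : -(η * (η + b - 1)) ≤ a / (2 * Dv) * r ^ 2 := by
    calc -(η * (η + b - 1)) ≤ r ^ 2 / (2 * Dv / a) := (le_div_iff₀ (by positivity)).2 hr2
      _ = a / (2 * Dv) * r ^ 2 := by field_simp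
  refine mul_le_mul_of_nonneg_left ?_ (by positivity)
  calc r ^ 2 * (s - η / 2 * φ r) / Dv - η * (η + b - 1) * φ r
      ≤ r ^ 2 * (-a * φ r) / Dv + a / (2 * Dv) * r ^ 2 * φ r := by
        have h1 : r ^ 2 * (s - η / 2 * φ r) / Dv ≤ r ^ 2 * (-a * φ r) / Dv := by gcongr
        have h2 := mul_le_mul_of_nonneg_right hr2' hφ_pos.le
        linarith
    _ = -(a / (2 * Dv)) * (r ^ 2 * φ r) := by field_simp; ring

lemma not_eventually_le_of_flux {G H p : ℝ → ℝ} {ε μ : ℝ} (hε : 0 < ε) (hμ : 0 < μ)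
    (hG : ∀ᶠ r in atTop, HasDerivAt G (H r / (r * p r)) r)
    (hG_pos : ∀ᶠ r in atTop, 0 < G r)
    (hH : ∀ᶠ r in atTop, DifferentiableAt ℝ H r)
    (hH_deriv : ∀ᶠ r in atTop, deriv H r ≤ -ε * (r * p r) * G r)
    (hp : ∀ᶠ r in atTop, DifferentiableAt ℝ p r)
    (hp_deriv : ∀ᶠ r in atTop, μ * deriv p r ≤ r * p r)
    (hp_top : Tendsto p atTop atTop) {c : ℝ} (hc : 0 < c) : ¬ ∀ᶠ r in atTop, c ≤ G r := by
  intro hcG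
  set β := ε * c * μ
  have hβ : 0 < β := by positivity
  have hp_pos := hp_top.eventually_gt_atTop 0
  obtain ⟨R, hR⟩ := eventually_atTop.1 <| hH.and <| hH_deriv.and <| hp.and <| hp_deriv.and <|
    hcG.and <| hp_pos.and <| eventually_gt_atTop 0
  have hderiv : ∀ r ∈ Ici R,
      HasDerivAt (fun s => H s + β * p s) (deriv H r + β * deriv p r) r :=
    fun r hr => (hR r hr).1.hasDerivAt.add ((hR r hr).2.2.1.hasDerivAt.const_mul β)
  have hanti : AntitoneOn (fun s => H s + β * p s) (Ici R) :=
    antitoneOn_Ici_of_deriv_nonpos (fun r hr => (hderiv r hr).differentiableAt) fun r hr => by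
      obtain ⟨-, hH', -, hp', hc', hp0, hr0⟩ := hR r (Ioi_subset_Ici_self hr)
      rw [(hderiv r (Ioi_subset_Ici_self hr)).deriv]
      have h1 : ε * (r * p r) * c ≤ ε * (r * p r) * G r :=
        mul_le_mul_of_nonneg_left hc' (by positivity)
      have h2 : ε * c * (μ * deriv p r) ≤ ε * c * (r * p r) :=
        mul_le_mul_of_nonneg_left hp' (by positivity)
      nlinarith
  have hG' : ∀ᶠ r in atTop, deriv G r ≤ -(β / 2) / r := by
    filter_upwards [hG, hp_top.eventually_ge_atTop (2 * (H R + β * p R) / β),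
      eventually_ge_atTop R, eventually_gt_atTop 0, hp_pos] with r hGr hKr hRr hr0 hpr
    have hHr : H r + β * p r ≤ H R + β * p R := hanti self_mem_Ici hRr hRr
    have hKr' := (div_le_iff₀ hβ).1 hKr
    rw [hGr.deriv, div_le_div_iff₀ (by positivity) hr0]
    nlinarith
  obtain ⟨r, hpos, hneg⟩ := (hG_pos.and <| (tendsto_atBot_of_deriv_le_neg_div (half_pos hβ)
    (hG.mono fun r h => h.differentiableAt) hG').eventually_lt_atBot 0).exists
  exact hpos.not_gt hneg

lemma exists_strictAntiOn_Ici_of_flux {G H p : ℝ → ℝ}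
    (hG : ∀ᶠ r in atTop, HasDerivAt G (H r / (r * p r)) r)
    (hG_pos : ∀ᶠ r in atTop, 0 < G r)
    (hH : ∀ᶠ r in atTop, DifferentiableAt ℝ H r)
    (hH_deriv : ∀ᶠ r in atTop, deriv H r < 0)
    (hp_pos : ∀ᶠ r in atTop, 0 < p r)
    (hG_small : ∀ c > 0, ¬ ∀ᶠ r in atTop, c ≤ G r) :
    ∃ R, StrictAntiOn G (Ici R) := by
  obtain ⟨R, hR⟩ := eventually_atTop.1 <| hG.and <| hG_pos.and <| hH.and <| hH_deriv.and <|
    hp_pos.and <| eventually_gt_atTop 0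
  have hH_anti : StrictAntiOn H (Ici R) :=
    strictAntiOn_Ici_of_deriv_neg (fun r hr => (hR r hr).2.2.1)
      fun r hr => (hR r (Ioi_subset_Ici_self hr)).2.2.2.1
  have hG_deriv : ∀ r ∈ Ici R, deriv G r = H r / (r * p r) ∧ 0 < r * p r :=
    fun r hr => ⟨(hR r hr).1.deriv, mul_pos (hR r hr).2.2.2.2.2 (hR r hr).2.2.2.2.1⟩
  by_cases hneg : ∃ R₁ ∈ Ici R, H R₁ < 0
  · obtain ⟨R₁, hR₁, hH₁⟩ := hneg
    have hsub : Ici R₁ ⊆ Ici R := Ici_subset_Ici.2 hR₁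
    refine ⟨R₁, strictAntiOn_Ici_of_deriv_neg (fun r hr => (hR r (hsub hr)).1.differentiableAt)
      fun r hr => ?_⟩
    obtain ⟨hGr, hrp⟩ := hG_deriv r (hsub (Ioi_subset_Ici_self hr))
    rw [hGr]
    exact div_neg_of_neg_of_pos ((hH_anti hR₁ (hsub (Ioi_subset_Ici_self hr)) hr).trans hH₁) hrp
  · -- otherwise `G` would be nondecreasing, hence bounded below by `G R > 0`
    push Not at hneg
    have hmono : MonotoneOn G (Ici R) :=
      monotoneOn_Ici_of_deriv_nonneg (fun r hr => (hR r hr).1.differentiableAt) fun r hr => by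
        obtain ⟨hGr, hrp⟩ := hG_deriv r (Ioi_subset_Ici_self hr)
        rw [hGr]
        exact div_nonneg (hneg r (Ioi_subset_Ici_self hr)) hrp.le
    exact absurd (eventually_atTop.2 ⟨R, fun r hr => hmono self_mem_Ici hr hr⟩)
      (hG_small _ (hR R le_rfl).2.1)

theorem eventually_strictAntiOn_and_tendsto_zero_of_flux {G H p : ℝ → ℝ} {ε μ : ℝ}
    (hε : 0 < ε) (hμ : 0 < μ)
    (hG : ∀ᶠ r in atTop, HasDerivAt G (H r / (r * p r)) r)
    (hG_pos : ∀ᶠ r in atTop, 0 < G r)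
    (hH : ∀ᶠ r in atTop, DifferentiableAt ℝ H r)
    (hH_deriv : ∀ᶠ r in atTop, deriv H r ≤ -ε * (r * p r) * G r)
    (hp : ∀ᶠ r in atTop, DifferentiableAt ℝ p r)
    (hp_deriv : ∀ᶠ r in atTop, μ * deriv p r ≤ r * p r)
    (hp_top : Tendsto p atTop atTop) :
    (∀ᶠ R in atTop, StrictAntiOn G (Ici R)) ∧ Tendsto G atTop (𝓝 0) := by
  have hG_small : ∀ c > 0, ¬ ∀ᶠ r in atTop, c ≤ G r := fun c hc =>
    not_eventually_le_of_flux hε hμ hG hG_pos hH hH_deriv hp hp_deriv hp_top hc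
  have hp_pos := hp_top.eventually_gt_atTop 0
  have hH_neg : ∀ᶠ r in atTop, deriv H r < 0 := by
    filter_upwards [hH_deriv, hp_pos, hG_pos, eventually_gt_atTop 0] with r hHr hpr hGr hr
    have : 0 < ε * (r * p r) * G r := by positivity
    linarith
  obtain ⟨R, hR⟩ := exists_strictAntiOn_Ici_of_flux hG hG_pos hH hH_neg hp_pos hG_small
  exact ⟨eventually_atTop.2 ⟨R, fun _ h => hR.mono (Ici_subset_Ici.2 h)⟩,
    tendsto_zero_of_antitoneOn_of_not_eventually_le hR.antitoneOn
      (hG_pos.mono fun _ h => h.le) hG_small⟩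

theorem stmt13_general
    (N : ℕ) (Du Dv lam q κ : ℝ)
    (hDu : 0 < Du) (hDv : 0 < Dv) (hq : 1 ≤ q)
    (ρ : ℝ → ℝ) (hρ : ∀ r : ℝ, ρ r = r ^ (N - 1) * Real.exp (r ^ 2 / (4 * Dv)))
    (φ dφ : ℝ → ℝ)
    (hpos : ∀ r ∈ Ici (0:ℝ), 0 < φ r)
    (hφ' : ∀ r ∈ Ici (0:ℝ), HasDerivWithinAt φ (dφ r) (Ici 0) r)
    (hODE : ∀ r ∈ Ioi (0:ℝ), HasDerivAt (fun s => Dv * (ρ s * dφ s))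
      (κ * ρ r * φ r + lam * ρ r * Real.exp (-(r ^ 2) / (4 * Du)) * φ r ^ q) r)
    (C m : ℝ)
    (hgrowth : ∀ r : ℝ, 0 ≤ r → φ r ≤ C * (1 + r) ^ m) :
    ∀ η : ℝ, 2 * κ < η →
      (∃ R : ℝ, 0 < R ∧ StrictAntiOn (fun r => r ^ (-η) * φ r) (Ici R)) ∧
        Tendsto (fun r => r ^ (-η) * φ r) atTop (nhds 0) := by
  intro η hη
  obtain rfl : ρ = gaussianWeight (N - 1) Dv := funext hρ
  have ha : 0 < (η / 2 - κ) / 2 := by linarith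
  have hρ' (r : ℝ) (hr : 0 < r) := hasDerivAt_gaussianWeight (N - 1) Dv hr.ne'
  have hφ (r : ℝ) (hr : 0 < r) : HasDerivAt φ (dφ r) r :=
    (hφ' r hr.le).hasDerivAt (Ici_mem_nhds hr)
  have hODE' (r : ℝ) (hr : 0 < r) := (hODE r hr).congr_deriv
    (g' := gaussianWeight (N - 1) Dv r * (κ * φ r + lam * exp (-(r ^ 2) / (4 * Du)) * φ r ^ q))
    (by ring)
  have hφ_pos : ∀ᶠ r in atTop, 0 < φ r := (eventually_ge_atTop 0).mono hpos
  have hflux_deriv : ∀ᶠ r in atTop, deriv (profileFlux (gaussianWeight (N - 1) Dv) φ dφ η) r ≤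
      -((η / 2 - κ) / 2 / (2 * Dv)) * (r * (gaussianWeight (N - 1) Dv r * r ^ (2 * η - 1))) *
        (r ^ (-η) * φ r) := by
    filter_upwards [eventually_gt_atTop 0, hφ_pos,
      eventually_mul_exp_neg_sq_div_mul_rpow_le (lam := lam) (by positivity : 0 < 4 * Du) hq ha
        hφ_pos ((eventually_ge_atTop 0).mono hgrowth),
      (tendsto_pow_atTop two_ne_zero).eventually_ge_atTop _] with r hr hφr hnonlin hr2
    exact deriv_profileFlux_le hr hDv ha (gaussianWeight_pos _ _ hr) hφr (hρ' r hr) (hφ r hr)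
      (hODE' r hr) (by linarith) hr2
  obtain ⟨hanti, hlim⟩ := eventually_strictAntiOn_and_tendsto_zero_of_flux
    (div_pos ha (by positivity)) hDv
    ((eventually_gt_atTop 0).mono fun r hr =>
      hasDerivAt_rpow_neg_mul hr (gaussianWeight_pos _ _ hr).ne' (hφ r hr))
    ((hφ_pos.and (eventually_gt_atTop 0)).mono fun r h => mul_pos (rpow_pos_of_pos h.2 _) h.1)
    ((eventually_gt_atTop 0).mono fun r hr =>
      (hasDerivAt_profileFlux hr hDv.ne' (hρ' r hr) (hφ r hr) (hODE' r hr)).differentiableAt)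
    hflux_deriv
    ((eventually_gt_atTop 0).mono fun r hr =>
      (hasDerivAt_gaussianWeight_mul_rpow _ _ _ hr).differentiableAt)
    (eventually_mul_deriv_gaussianWeight_mul_rpow_le _ hDv _)
    (tendsto_gaussianWeight_mul_rpow_atTop _ hDv _)
  exact ⟨(hanti.and (eventually_gt_atTop 0)).exists.imp fun R h => ⟨h.2, h.1⟩, hlim⟩

/-- Let `φ` be a positive C² global solution of the profile equation with
`κ ≥ −N/2` and algebraic growth `φ(r) ≤ C(1+r)^m`. Then for every `η > 2κ` the function
`g_η(r) = r^{−η} φ(r)` is decreasing for all sufficiently large `r`, and `r^{−η} φ(r) → 0`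
as `r → ∞`. -/
theorem stmt13
    (N : ℕ) (hN : 1 ≤ N) (Du Dv lam q κ : ℝ)
    (hDu : 0 < Du) (hDv : 0 < Dv) (hlam : 0 < lam) (hq : 1 ≤ q)
    (hκ : -(N : ℝ) / 2 ≤ κ)
    (ρ : ℝ → ℝ) (hρ : ∀ r : ℝ, ρ r = r ^ (N - 1) * Real.exp (r ^ 2 / (4 * Dv)))
    (φ dφ : ℝ → ℝ)
    (hpos : ∀ r ∈ Ici (0:ℝ), 0 < φ r)
    (hφ' : ∀ r ∈ Ici (0:ℝ), HasDerivWithinAt φ (dφ r) (Ici 0) r)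
    (hODE : ∀ r ∈ Ioi (0:ℝ), HasDerivAt (fun s => Dv * (ρ s * dφ s))
      (κ * ρ r * φ r + lam * ρ r * Real.exp (-(r ^ 2) / (4 * Du)) * φ r ^ q) r)
    (hφ0 : φ 0 = 1) (hdφ0 : dφ 0 = 0)
    (C m : ℝ) (hC : 0 < C) (hm : 0 < m)
    (hgrowth : ∀ r : ℝ, 0 ≤ r → φ r ≤ C * (1 + r) ^ m) :
    ∀ η : ℝ, 2 * κ < η →
      (∃ R : ℝ, 0 < R ∧ StrictAntiOn (fun r => r ^ (-η) * φ r) (Ici R)) ∧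
        Tendsto (fun r => r ^ (-η) * φ r) atTop (nhds 0) :=
  stmt13_general N Du Dv lam q κ hDu hDv hq ρ hρ φ dφ hpos hφ' hODE C m hgrowth
end

section
/- Let N ≥ 1 be an integer, D_u, D_v, λ > 0, q ≥ 1 and κ ≥ 0, and set ρ(r) = r^{N−1} e^{r²/(4D_v)}. Let φ : [0,∞) → ℝ be a positive C² solution of D_v (ρ φ')' = κ ρ φ + λ ρ e^{−r²/(4D_u)} φ^q on (0,∞) with φ(0) = 1, φ'(0) = 0, and assume there exist C > 0 and m > 0 with φ(r) ≤ C (1+r)^m for all r ≥ 0. Then there exist C* > 0 and R > 0 such that φ(r) ≥ C* r^{2κ} for all r ≥ R. -/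
/-!
The flux `ρ φ'` is strictly increasing, because the right-hand side of the equation is positive;
since `φ'(0) = 0`, a Darboux argument near `0` then forces `φ' > 0` on `(0, ∞)`.
For `c > 2κ D_v (2κ - 1 + n)` (with `n = N - 1`) the function `v(r) = r ^ (2κ) + c r ^ (2κ - 2)`
is a subsolution `D_v (ρ v')' ≤ κ ρ v` for large `r`. Pick `R` in that range and `ε > 0` with
`φ - ε v` and its derivative positive at `R`. As long as `φ - ε v > 0`, the equation makes the flux
`ρ (φ - ε v)'` nondecreasing, hence positive, so `φ - ε v` increases and never reaches `0`.
Thus `φ ≥ ε v ≥ ε r ^ (2κ)` on `[R, ∞)`.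
-/

open Real Set Filter Topology

lemma exists_pos_mul_lt_and_mul_lt {x x' y y' : ℝ} (hy : 0 < y) (hy' : 0 < y') :
    ∃ ε > 0, ε * x < y ∧ ε * x' < y' := by
  have small : ∀ {z w : ℝ}, 0 < w → ∀ᶠ ε in 𝓝[>] (0 : ℝ), ε * z < w := fun {z} _ hw =>
    (((continuous_mul_const z).tendsto' 0 0 (zero_mul z)).eventually (gt_mem_nhds hw)).filter_mono
      nhdsWithin_le_nhds
  exact ((eventually_mem_nhdsWithin (a := (0 : ℝ)) (s := Ioi 0)).and
    ((small hy).and (small hy'))).exists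

lemma pos_of_strictMonoOn_mul_deriv {ρ f f' : ℝ → ℝ} {a r : ℝ}
    (hf : ∀ x ∈ Ici a, HasDerivWithinAt f (f' x) (Ici a) x) (ha : f' a = 0)
    (hρ : ∀ x ∈ Ioi a, 0 < ρ x) (hρ_mono : MonotoneOn ρ (Ioi a))
    (hflux : StrictMonoOn (fun x => ρ x * f' x) (Ioi a)) (hr : a < r) : 0 < f' r := by
  by_contra! hr_nonpos
  obtain ⟨r₁, har₁, hr₁r⟩ := exists_between hr
  have hflux₁ : ρ r₁ * f' r₁ < 0 :=
    (hflux har₁ hr hr₁r).trans_le (mul_nonpos_of_nonneg_of_nonpos (hρ r hr).le hr_nonpos)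
  have hr₁_neg : f' r₁ < 0 := neg_of_mul_neg_right hflux₁ (hρ r₁ har₁).le
  -- On `(a, r₁]` the flux stays below its negative value at `r₁` while `ρ` stays below `ρ r₁`.
  have hbound : ∀ x ∈ Ioc a r₁, f' x ≤ f' r₁ := by
    intro x ⟨hax, hxr₁⟩
    have h1 : ρ x * f' x ≤ ρ r₁ * f' r₁ := hflux.monotoneOn hax har₁ hxr₁
    have h2 : ρ r₁ * f' r₁ ≤ ρ x * f' r₁ :=
      mul_le_mul_of_nonpos_right (hρ_mono hax har₁ hxr₁) hr₁_neg.le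
    exact le_of_mul_le_mul_left (h1.trans h2) (hρ x hax)
  obtain ⟨x, hx, hx_eq⟩ := exists_hasDerivWithinAt_eq_of_lt_of_gt har₁.le
    (fun x hx => (hf x hx.1).mono Icc_subset_Ici_self) (m := f' r₁ / 2)
    (by rw [ha]; linarith) (by linarith)
  linarith [hbound x ⟨hx.1, hx.2.le⟩]

lemma pos_of_hasDerivAt_flux_nonneg {ρ w dw g : ℝ → ℝ} {R x : ℝ}
    (hρ : ∀ y ∈ Ici R, 0 < ρ y) (hw : ∀ y ∈ Ici R, HasDerivAt w (dw y) y)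
    (hflux : ∀ y ∈ Ici R, HasDerivAt (fun z => ρ z * dw z) (g y) y)
    (hg : ∀ y ∈ Ici R, 0 < w y → 0 ≤ g y) (hwR : 0 < w R) (hdwR : 0 < dw R) (hx : R ≤ x) :
    0 < w x := by
  by_contra! hx_nonpos
  -- Let `r₀` be the first zero of `w` after `R`.
  set S := Icc R x ∩ w ⁻¹' Iic 0
  have hw_cont : ContinuousOn w (Icc R x) := fun y hy =>
    (hw y hy.1).continuousAt.continuousWithinAt
  have hS : IsCompact S := isCompact_Icc.of_isClosed_subset
    (hw_cont.preimage_isClosed_of_isClosed isClosed_Icc isClosed_Iic) inter_subset_left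
  have hr₀ : sInf S ∈ S := hS.sInf_mem ⟨x, ⟨hx, le_rfl⟩, hx_nonpos⟩
  set r₀ := sInf S
  have hw_pos : ∀ y ∈ Ico R r₀, 0 < w y := by
    intro y hy
    by_contra! hy_nonpos
    exact (csInf_le hS.bddBelow ⟨⟨hy.1, hy.2.le.trans hr₀.1.2⟩, hy_nonpos⟩).not_gt hy.2
  have hwr₀ : w r₀ ≤ 0 := hr₀.2
  have hRr₀ : R < r₀ := hr₀.1.1.lt_of_ne fun h => by rw [← h] at hwr₀; linarith
  have hint : interior (Icc R r₀) ⊆ Ico R r₀ := by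
    rw [interior_Icc]; exact Ioo_subset_Ico_self
  have hflux_mono : MonotoneOn (fun z => ρ z * dw z) (Icc R r₀) :=
    monotoneOn_of_hasDerivWithinAt_nonneg (convex_Icc R r₀)
      (fun y hy => (hflux y hy.1).continuousAt.continuousWithinAt)
      (fun y hy => (hflux y (hint hy).1).hasDerivWithinAt)
      (fun y hy => hg y (hint hy).1 (hw_pos y (hint hy)))
  have hdw_pos : ∀ y ∈ Icc R r₀, 0 < dw y := fun y hy =>
    pos_of_mul_pos_right ((mul_pos (hρ R self_mem_Ici) hdwR).trans_le
      (hflux_mono ⟨le_rfl, hRr₀.le⟩ hy hy.1)) (hρ y hy.1).le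
  have hw_mono : StrictMonoOn w (Icc R r₀) :=
    strictMonoOn_of_hasDerivWithinAt_pos (convex_Icc R r₀)
      (fun y hy => (hw y hy.1).continuousAt.continuousWithinAt)
      (fun y hy => (hw y (hint hy).1).hasDerivWithinAt)
      (fun y hy => hdw_pos y (interior_subset hy))
  linarith [hw_mono ⟨le_rfl, hRr₀.le⟩ ⟨hRr₀.le, le_rfl⟩ hRr₀]

noncomputable def weight (n : ℕ) (D r : ℝ) : ℝ := r ^ n * exp (r ^ 2 / (4 * D))

section Weight

variable {n : ℕ} {D r : ℝ}

lemma weight_pos (hr : 0 < r) : 0 < weight n D r := by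
  unfold weight; positivity

lemma monotoneOn_weight (hD : 0 < D) : MonotoneOn (weight n D) (Ici 0) := by
  intro x (hx : 0 ≤ x) y _ hxy
  unfold weight
  gcongr
  exact pow_nonneg (hx.trans hxy) n

lemma hasDerivAt_weight (hr : r ≠ 0) :
    HasDerivAt (weight n D) (weight n D r * (n / r + r / (2 * D))) r := by
  refine ((hasDerivAt_pow n r).mul ((hasDerivAt_pow 2 r).div_const (4 * D)).exp).congr_deriv ?_
  unfold weight
  rcases n with _ | n
  · push_cast; ring
  · simp only [Nat.add_sub_cancel, pow_succ]
    field_simp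
    ring

lemma hasDerivAt_weight_mul_deriv_rpow (hr : 0 < r) (p : ℝ) :
    HasDerivAt (fun s => weight n D s * (p * s ^ (p - 1)))
      (p * weight n D r * r ^ p * ((p - 1 + n) / r ^ 2 + 1 / (2 * D))) r := by
  refine ((hasDerivAt_weight hr.ne').mul
    ((Real.hasDerivAt_rpow_const (p := p - 1) (Or.inl hr.ne')).const_mul p)).congr_deriv ?_
  rw [Real.rpow_sub_one hr.ne', Real.rpow_sub_one hr.ne', Real.rpow_sub_one hr.ne']
  field_simp
  ring

end Weight

noncomputable def barrier (κ c s : ℝ) : ℝ := s ^ (2 * κ) + c * s ^ (2 * κ - 2)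

noncomputable def barrierDeriv (κ c s : ℝ) : ℝ :=
  2 * κ * s ^ (2 * κ - 1) + c * ((2 * κ - 2) * s ^ (2 * κ - 2 - 1))

noncomputable def barrierFluxDeriv (n : ℕ) (D κ c r : ℝ) : ℝ :=
  weight n D r * r ^ (2 * κ - 2) *
    (2 * κ * (2 * κ - 1 + n) + c * (2 * κ - 2) * (2 * κ - 3 + n) / r ^ 2
      + (κ * r ^ 2 + c * (κ - 1)) / D)

section Barrier

variable {n : ℕ} {D κ c r : ℝ}

lemma rpow_eq_rpow_sub_two_mul_sq (hr : 0 < r) (a : ℝ) : r ^ a = r ^ (a - 2) * r ^ 2 := by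
  rw [← Real.rpow_natCast, ← Real.rpow_add hr]
  norm_num

lemma hasDerivAt_barrier (hr : 0 < r) : HasDerivAt (barrier κ c) (barrierDeriv κ c r) r :=
  (Real.hasDerivAt_rpow_const (Or.inl hr.ne')).add
    ((Real.hasDerivAt_rpow_const (Or.inl hr.ne')).const_mul c)

lemma hasDerivAt_weight_mul_barrierDeriv (hr : 0 < r) :
    HasDerivAt (fun s => weight n D s * barrierDeriv κ c s) (barrierFluxDeriv n D κ c r) r := by
  have h := (hasDerivAt_weight_mul_deriv_rpow (n := n) (D := D) hr (2 * κ)).add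
    ((hasDerivAt_weight_mul_deriv_rpow (n := n) (D := D) hr (2 * κ - 2)).const_mul c)
  refine (h.congr_deriv ?_).congr_of_eventuallyEq (Eventually.of_forall fun s => ?_)
  · unfold barrierFluxDeriv
    rw [rpow_eq_rpow_sub_two_mul_sq hr (2 * κ)]
    field_simp
    ring
  · simp only [barrierDeriv, Pi.add_apply]
    ring

lemma eventually_mul_barrierFluxDeriv_le (hD : 0 < D) (hc : 2 * κ * D * (2 * κ - 1 + n) < c) :
    ∀ᶠ r in atTop, D * barrierFluxDeriv n D κ c r ≤ κ * weight n D r * barrier κ c r := by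
  set K := c * (2 * κ - 2) * D * (2 * κ - 3 + n)
  have hK : Tendsto (fun r : ℝ => K / r ^ 2) atTop (𝓝 0) :=
    tendsto_const_nhds.div_atTop (tendsto_pow_atTop two_ne_zero)
  filter_upwards [hK.eventually (gt_mem_nhds (sub_pos.2 hc)), eventually_gt_atTop 0]
    with r hKr hr
  -- With the exponent `2κ` the terms of order `r ^ (2κ)` cancel.
  have key : D * barrierFluxDeriv n D κ c r - κ * weight n D r * barrier κ c r
      = weight n D r * r ^ (2 * κ - 2) * (K / r ^ 2 - (c - 2 * κ * D * (2 * κ - 1 + n))) := by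
    unfold barrierFluxDeriv barrier
    rw [rpow_eq_rpow_sub_two_mul_sq hr (2 * κ)]
    field_simp
    ring
  have : 0 < weight n D r * r ^ (2 * κ - 2) := mul_pos (weight_pos hr) (Real.rpow_pos_of_pos hr _)
  nlinarith

end Barrier

section Flux

variable {n : ℕ} {D κ : ℝ} {φ dφ S : ℝ → ℝ}

lemma deriv_pos_of_hasDerivAt_weight_mul (hD : 0 < D)
    (hφ : ∀ r ∈ Ici 0, HasDerivWithinAt φ (dφ r) (Ici 0) r) (hdφ0 : dφ 0 = 0)
    (hflux : ∀ r ∈ Ioi 0, HasDerivAt (fun s => weight n D s * dφ s) (S r) r)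
    (hS_pos : ∀ r ∈ Ioi 0, 0 < S r) {r : ℝ} (hr : 0 < r) : 0 < dφ r :=
  pos_of_strictMonoOn_mul_deriv hφ hdφ0 (fun _ hx => weight_pos hx)
    ((monotoneOn_weight hD).mono Ioi_subset_Ici_self)
    (strictMonoOn_of_hasDerivWithinAt_pos (convex_Ioi 0)
      (fun x hx => (hflux x hx).continuousAt.continuousWithinAt)
      (fun x hx => (hflux x (interior_subset hx)).hasDerivWithinAt)
      (fun x hx => hS_pos x (interior_subset hx))) hr

lemma mul_barrier_lt_of_hasDerivAt_weight_mul {c R ε r : ℝ} (hD : 0 < D) (hκ : 0 ≤ κ)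
    (hφ : ∀ r ∈ Ioi 0, HasDerivAt φ (dφ r) r)
    (hflux : ∀ r ∈ Ioi 0, HasDerivAt (fun s => weight n D s * dφ s) (S r) r)
    (hS : ∀ r ∈ Ioi 0, κ * weight n D r * φ r ≤ D * S r) (hR_pos : 0 < R)
    (hR : ∀ r, R ≤ r → D * barrierFluxDeriv n D κ c r ≤ κ * weight n D r * barrier κ c r)
    (hε : 0 ≤ ε) (hεv : ε * barrier κ c R < φ R) (hεdv : ε * barrierDeriv κ c R < dφ R)
    (hr : R ≤ r) : ε * barrier κ c r < φ r := by
  have hw : 0 < φ r - ε * barrier κ c r := pos_of_hasDerivAt_flux_nonneg (ρ := weight n D)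
    (w := fun s => φ s - ε * barrier κ c s) (dw := fun s => dφ s - ε * barrierDeriv κ c s)
    (g := fun s => S s - ε * barrierFluxDeriv n D κ c s)
    (fun y hy => weight_pos (hR_pos.trans_le hy))
    (fun y hy => (hφ y (hR_pos.trans_le hy)).sub
      ((hasDerivAt_barrier (hR_pos.trans_le hy)).const_mul ε))
    (fun y hy => ((hflux y (hR_pos.trans_le hy)).sub
        ((hasDerivAt_weight_mul_barrierDeriv (hR_pos.trans_le hy)).const_mul ε)).congr_of_eventuallyEq
      (Eventually.of_forall fun z => by simp only [Pi.sub_apply]; ring))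
    (fun y hy hwy => by
      -- `D (S - ε (ρ v')') ≥ κ ρ φ - ε κ ρ v = κ ρ (φ - ε v) ≥ 0`
      have hSy := hS y (hR_pos.trans_le hy)
      have hsub := mul_le_mul_of_nonneg_left (hR y hy) hε
      have hκw := mul_nonneg (mul_nonneg hκ (weight_pos (n := n) (D := D) (hR_pos.trans_le hy)).le)
        hwy.le
      nlinarith)
    (by linarith) (by linarith) hr
  linarith

theorem exists_rpow_le_of_hasDerivAt_weight_mul (hD : 0 < D) (hκ : 0 ≤ κ)
    (hφ_pos : ∀ r ∈ Ioi 0, 0 < φ r)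
    (hφ : ∀ r ∈ Ici 0, HasDerivWithinAt φ (dφ r) (Ici 0) r) (hdφ0 : dφ 0 = 0)
    (hflux : ∀ r ∈ Ioi 0, HasDerivAt (fun s => weight n D s * dφ s) (S r) r)
    (hS_pos : ∀ r ∈ Ioi 0, 0 < S r) (hS : ∀ r ∈ Ioi 0, κ * weight n D r * φ r ≤ D * S r) :
    ∃ C > 0, ∃ R > 0, ∀ r, R ≤ r → C * r ^ (2 * κ) ≤ φ r := by
  obtain ⟨c, hc_nonneg, hc⟩ : ∃ c : ℝ, 0 ≤ c ∧ 2 * κ * D * (2 * κ - 1 + n) < c :=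
    ⟨|2 * κ * D * (2 * κ - 1 + n)| + 1, by positivity, (le_abs_self _).trans_lt (lt_add_one _)⟩
  obtain ⟨R, hR⟩ := ((eventually_mul_barrierFluxDeriv_le hD hc).and
    (eventually_gt_atTop 0)).exists_forall_of_atTop
  have hR_pos : 0 < R := (hR R le_rfl).2
  obtain ⟨ε, hε, hεv, hεdv⟩ := exists_pos_mul_lt_and_mul_lt (x := barrier κ c R)
    (x' := barrierDeriv κ c R) (hφ_pos R hR_pos)
    (deriv_pos_of_hasDerivAt_weight_mul hD hφ hdφ0 hflux hS_pos hR_pos)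
  refine ⟨ε, hε, R, hR_pos, fun r hr => le_of_lt ?_⟩
  calc ε * r ^ (2 * κ) ≤ ε * barrier κ c r := by
        have : 0 < r := hR_pos.trans_le hr
        gcongr
        exact le_add_of_nonneg_right (by positivity)
    _ < φ r := mul_barrier_lt_of_hasDerivAt_weight_mul hD hκ
        (fun r hr => (hφ r (Ioi_subset_Ici_self hr)).hasDerivAt (Ici_mem_nhds hr)) hflux hS
        hR_pos (fun r hr => (hR r hr).1) hε.le hεv hεdv hr

end Flux

theorem stmt14_general
    (N : ℕ) (Du Dv lam q κ : ℝ)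
    (hDv : 0 < Dv) (hlam : 0 < lam) (hκ : 0 ≤ κ)
    (ρ : ℝ → ℝ) (hρ : ∀ r : ℝ, ρ r = r ^ (N - 1) * Real.exp (r ^ 2 / (4 * Dv)))
    (φ dφ : ℝ → ℝ)
    (hpos : ∀ r ∈ Ici (0:ℝ), 0 < φ r)
    (hφ' : ∀ r ∈ Ici (0:ℝ), HasDerivWithinAt φ (dφ r) (Ici 0) r)
    (hODE : ∀ r ∈ Ioi (0:ℝ), HasDerivAt (fun s => Dv * (ρ s * dφ s))
      (κ * ρ r * φ r + lam * ρ r * Real.exp (-(r ^ 2) / (4 * Du)) * φ r ^ q) r)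
    (hdφ0 : dφ 0 = 0) :
    ∃ Cstar > 0, ∃ R > 0, ∀ r : ℝ, R ≤ r → Cstar * r ^ (2 * κ) ≤ φ r := by
  obtain rfl : ρ = weight (N - 1) Dv := funext hρ
  refine exists_rpow_le_of_hasDerivAt_weight_mul (n := N - 1) hDv hκ
    (fun r hr => hpos r (Ioi_subset_Ici_self hr)) hφ' hdφ0
    (S := fun r => Dv⁻¹ * (κ * weight (N - 1) Dv r * φ r
      + lam * weight (N - 1) Dv r * exp (-(r ^ 2) / (4 * Du)) * φ r ^ q))
    (fun r hr => ?_) (fun r hr => ?_) (fun r hr => ?_)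
  · simpa only [inv_mul_cancel_left₀ hDv.ne'] using (hODE r hr).const_mul Dv⁻¹
  all_goals
    have := weight_pos (n := N - 1) (D := Dv) hr
    have := hpos r (Ioi_subset_Ici_self hr)
  · positivity
  · rw [mul_inv_cancel_left₀ hDv.ne']
    exact le_add_of_nonneg_right (by positivity)

/-- Let `φ` be a positive C² global solution of the profile equation with
`κ ≥ 0` and algebraic growth `φ(r) ≤ C(1+r)^m`. Then there are `C* > 0` and `R > 0` with
`φ(r) ≥ C* r^{2κ}` for all `r ≥ R`. -/
theorem stmt14
    (N : ℕ) (hN : 1 ≤ N) (Du Dv lam q κ : ℝ)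
    (hDu : 0 < Du) (hDv : 0 < Dv) (hlam : 0 < lam) (hq : 1 ≤ q) (hκ : 0 ≤ κ)
    (ρ : ℝ → ℝ) (hρ : ∀ r : ℝ, ρ r = r ^ (N - 1) * Real.exp (r ^ 2 / (4 * Dv)))
    (φ dφ : ℝ → ℝ)
    (hpos : ∀ r ∈ Ici (0:ℝ), 0 < φ r)
    (hφ' : ∀ r ∈ Ici (0:ℝ), HasDerivWithinAt φ (dφ r) (Ici 0) r)
    (hODE : ∀ r ∈ Ioi (0:ℝ), HasDerivAt (fun s => Dv * (ρ s * dφ s))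
      (κ * ρ r * φ r + lam * ρ r * Real.exp (-(r ^ 2) / (4 * Du)) * φ r ^ q) r)
    (hφ0 : φ 0 = 1) (hdφ0 : dφ 0 = 0)
    (C m : ℝ) (hC : 0 < C) (hm : 0 < m)
    (hgrowth : ∀ r : ℝ, 0 ≤ r → φ r ≤ C * (1 + r) ^ m) :
    ∃ Cstar > 0, ∃ R > 0, ∀ r : ℝ, R ≤ r → Cstar * r ^ (2 * κ) ≤ φ r :=
  stmt14_general N Du Dv lam q κ hDv hlam hκ ρ hρ φ dφ hpos hφ' hODE hdφ0
end

section
/- Let N ≥ 1 be an integer, D_u, D_v, λ > 0, q ≥ 1 and −N/2 ≤ κ < 0, and set ρ(r) = r^{N−1} e^{r²/(4D_v)}. Let φ : [0,∞) → ℝ be a positive C² solution of D_v (ρ φ')' = κ ρ φ + λ ρ e^{−r²/(4D_u)} φ^q on (0,∞) with φ(0) = 1, φ'(0) = 0. Then for every η < 2κ there exist constants C > 0 and R > 0 such that φ(r) > C r^η for all r ≥ R. -/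
/-!
Write `ρ = r^m exp (r² / (4D))` and `g > 0` for the nonlinear term. For a multiplier `ψ`, the
weighted Wronskian `D ρ (φ' ψ - φ ψ')` has derivative
`ρ ((κ φ + g) ψ - φ (D ψ'' + (m D / r + r / 2) ψ'))`.

* With `ψ = exp (-r² / (4D))` the Wronskian is `r^m (D φ' + r φ / 2)`; it is increasing because
  `κ ≥ -(m + 1) / 2` and `g > 0`, and positive because `φ'(0) = 0`.
* With `ψ = exp (-r² / (8D))` the Wronskian is eventually increasing. It cannot stay nonpositive:
  otherwise `φ exp (r² / (8D))` would be bounded and the first Wronskian would tend to `0`.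
  Hence `φ exp (r² / (8D))` is eventually increasing, so bounded below by a positive constant.
* With `ψ = r^η`, `η < 2κ`, that Gaussian lower bound makes the derivative of the Wronskian tend
  to `+∞`. So eventually `φ' ψ - φ ψ' = ψ² (φ / ψ)' > 0`, and `φ / r^η` is bounded below.
-/

open Real Set Filter Topology

theorem HasDerivWithinAt.le_of_forall_deriv_le {f f' : ℝ → ℝ} {a b c d : ℝ}
    (hfa : HasDerivWithinAt f d (Ici a) a) (hab : a < b)
    (hf : ∀ x ∈ Ioo a b, HasDerivAt f (f' x) x) (hle : ∀ x ∈ Ioo a b, f' x ≤ c) : d ≤ c := by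
  have hanti : AntitoneOn (fun x => f x - c * x) (Ico a b) := by
    refine antitoneOn_of_hasDerivWithinAt_nonpos (f' := fun x => f' x - c) (convex_Ico a b)
      (fun x hx => ?_) (fun x hx => ?_) (fun x hx => ?_) <;> try rw [interior_Ico] at hx
    · rcases eq_or_lt_of_le hx.1 with rfl | hax
      · exact (hfa.continuousWithinAt.mono Ico_subset_Ici_self).sub (by fun_prop)
      · exact ((hf x ⟨hax, hx.2⟩).continuousAt.sub (by fun_prop)).continuousWithinAt
    · exact ((hf x hx).sub ((hasDerivAt_id x).const_mul c)).hasDerivWithinAt.congr_deriv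
        (by simp)
    · linarith [hle x hx]
  have hslope : Tendsto (slope f a) (𝓝[>] a) (𝓝 d) :=
    (hasDerivWithinAt_iff_tendsto_slope' (lt_irrefl a)).1 hfa.Ioi_of_Ici
  refine le_of_tendsto hslope ?_
  filter_upwards [Ioo_mem_nhdsGT hab] with x hx
  have : f x - c * x ≤ f a - c * a := hanti (left_mem_Ico.2 hab) (Ioo_subset_Ico_self hx) hx.1.le
  rw [slope_def_field, div_le_iff₀ (sub_pos.2 hx.1)]
  linarith

theorem exists_monotoneOn_Ici_of_eventually_deriv_nonneg {f f' : ℝ → ℝ}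
    (hf : ∀ᶠ x in atTop, HasDerivAt f (f' x) x) (hf' : ∀ᶠ x in atTop, 0 ≤ f' x) :
    ∃ b, MonotoneOn f (Ici b) := by
  obtain ⟨b, hb⟩ := eventually_atTop.1 (hf.and hf')
  refine ⟨b, monotoneOn_of_hasDerivWithinAt_nonneg (f' := f') (convex_Ici b)
    (fun x hx => (hb x hx).1.continuousAt.continuousWithinAt) (fun x hx => ?_) (fun x hx => ?_)⟩
  · exact (hb x (interior_subset hx)).1.hasDerivWithinAt
  · exact (hb x (interior_subset hx)).2

theorem exists_pos_eventually_le_of_frequently_pos {f f' : ℝ → ℝ}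
    (hf : ∀ᶠ x in atTop, HasDerivAt f (f' x) x) (hf' : ∀ᶠ x in atTop, 0 ≤ f' x)
    (hpos : ∃ᶠ x in atTop, 0 < f x) : ∃ c > 0, ∀ᶠ x in atTop, c ≤ f x := by
  obtain ⟨b, hmono⟩ := exists_monotoneOn_Ici_of_eventually_deriv_nonneg hf hf'
  obtain ⟨t, ht, hbt⟩ := (hpos.and_eventually (eventually_ge_atTop b)).exists
  exact ⟨f t, ht, (eventually_ge_atTop t).mono fun x hx => hmono hbt (hbt.trans hx) hx⟩

theorem tendsto_atTop_of_deriv_tendsto_atTop {f f' : ℝ → ℝ}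
    (hf : ∀ᶠ x in atTop, HasDerivAt f (f' x) x) (hf' : Tendsto f' atTop atTop) :
    Tendsto f atTop atTop := by
  obtain ⟨b, hb⟩ := exists_monotoneOn_Ici_of_eventually_deriv_nonneg (f := fun x => f x - x)
    (hf.mono fun x hx => hx.sub (hasDerivAt_id' x))
    ((hf'.eventually_ge_atTop 1).mono fun x hx => sub_nonneg.2 hx)
  refine tendsto_atTop_mono' atTop ((eventually_ge_atTop b).mono fun x hx => ?_)
    (tendsto_atTop_add_const_left atTop (f b - b) tendsto_id)
  have : f b - b ≤ f x - x := hb self_mem_Ici hx hx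
  rw [id]
  linarith

theorem tendsto_rpow_mul_exp_sq_div_atTop (a : ℝ) {c : ℝ} (hc : 0 < c) :
    Tendsto (fun s : ℝ => s ^ a * exp (s ^ 2 / c)) atTop atTop := by
  refine tendsto_atTop_mono' _ ?_ (tendsto_exp_mul_div_rpow_atTop (-a) c⁻¹ (inv_pos.2 hc))
  filter_upwards [eventually_ge_atTop (1 : ℝ)] with s hs
  rw [rpow_neg (by linarith), div_inv_eq_mul, mul_comm, inv_mul_eq_div]
  gcongr
  nlinarith

noncomputable def profileWeight (m : ℕ) (D r : ℝ) : ℝ := r ^ m * exp (r ^ 2 / (4 * D))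

theorem profileWeight_pos (m : ℕ) (D : ℝ) {r : ℝ} (hr : 0 < r) : 0 < profileWeight m D r := by
  unfold profileWeight
  positivity

theorem hasDerivAt_profileWeight (m : ℕ) {D r : ℝ} (hD : D ≠ 0) (hr : r ≠ 0) :
    HasDerivAt (profileWeight m D) (profileWeight m D r * (m / r + r / (2 * D))) r := by
  have hexp : HasDerivAt (fun s => exp (s ^ 2 / (4 * D)))
      (exp (r ^ 2 / (4 * D)) * (2 * r / (4 * D))) r := by
    simpa using ((hasDerivAt_pow 2 r).div_const (4 * D)).exp
  refine ((hasDerivAt_pow m r).mul hexp).congr_deriv ?_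
  unfold profileWeight
  rcases Nat.eq_zero_or_pos m with rfl | hm
  · field_simp
    ring
  · obtain ⟨k, rfl⟩ : ∃ k, m = k + 1 := ⟨m - 1, by omega⟩
    simp only [Nat.add_sub_cancel, pow_succ]
    push_cast
    field_simp
    ring

/-- For the profile equation, `m = N - 1` and `g r = λ exp (-r² / (4 D_u)) φ(r)^q`. -/
structure IsProfileSolution (m : ℕ) (D κ : ℝ) (g φ φ' : ℝ → ℝ) : Prop where
  pos : ∀ r ∈ Ioi (0 : ℝ), 0 < φ r
  forcing_pos : ∀ r ∈ Ioi (0 : ℝ), 0 < g r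
  hasDerivWithinAt_zero : HasDerivWithinAt φ 0 (Ici 0) 0
  hasDerivAt : ∀ r ∈ Ioi (0 : ℝ), HasDerivAt φ (φ' r) r
  ode : ∀ r ∈ Ioi (0 : ℝ), HasDerivAt (fun s => D * (profileWeight m D s * φ' s))
    (profileWeight m D r * (κ * φ r + g r)) r

/-- The Wronskian `D ρ (φ' ψ - φ ψ')` for the multiplier `ψ = exp (-θ r² / (4 D))`. -/
noncomputable def gaussFlux (m : ℕ) (D θ : ℝ) (φ φ' : ℝ → ℝ) (s : ℝ) : ℝ :=
  s ^ m * exp ((1 - θ) * s ^ 2 / (4 * D)) * (D * φ' s + θ * s * φ s / 2)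

theorem gaussFlux_one (m : ℕ) (D : ℝ) (φ φ' : ℝ → ℝ) (s : ℝ) :
    gaussFlux m D 1 φ φ' s = s ^ m * (D * φ' s + s * φ s / 2) := by
  simp [gaussFlux]

theorem gaussFlux_half (m : ℕ) (D : ℝ) (φ φ' : ℝ → ℝ) (s : ℝ) :
    gaussFlux m D (1 / 2) φ φ' s = s ^ m * exp (s ^ 2 / (8 * D)) * (D * φ' s + s * φ s / 4) := by
  rw [gaussFlux, show (1 - 1 / 2) * s ^ 2 / (4 * D) = s ^ 2 / (8 * D) by ring]
  ring

namespace IsProfileSolution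

variable {m : ℕ} {D κ : ℝ} {g φ φ' : ℝ → ℝ}

theorem hasDerivAt_wronskian (h : IsProfileSolution m D κ g φ φ') (hD : D ≠ 0) {r : ℝ}
    (hr : 0 < r) {ψ ψ' : ℝ → ℝ} {ψ'' : ℝ} (hψ : HasDerivAt ψ (ψ' r) r)
    (hψ' : HasDerivAt ψ' ψ'' r) :
    HasDerivAt (fun s => D * profileWeight m D s * (φ' s * ψ s - φ s * ψ' s))
      (profileWeight m D r * ((κ * φ r + g r) * ψ r
        - φ r * (D * ψ'' + (m * D / r + r / 2) * ψ' r))) r := by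
  have hρ := hasDerivAt_profileWeight m hD hr.ne'
  have := ((h.ode r hr).mul hψ).sub (((hρ.const_mul D).mul hψ').mul (h.hasDerivAt r hr))
  refine (this.congr_deriv ?_).congr_of_eventuallyEq (Eventually.of_forall fun s => ?_)
  · simp only [Pi.mul_apply]
    field_simp
    ring
  · simp only [Pi.mul_apply, Pi.sub_apply]
    ring

theorem hasDerivAt_gaussFlux (h : IsProfileSolution m D κ g φ φ') (hD : D ≠ 0) (θ : ℝ) {r : ℝ}
    (hr : 0 < r) :
    HasDerivAt (gaussFlux m D θ φ φ') (r ^ m * exp ((1 - θ) * r ^ 2 / (4 * D)) *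
      ((κ + θ * (m + 1) / 2 + θ * (1 - θ) * r ^ 2 / (4 * D)) * φ r + g r)) r := by
  have hψ : ∀ s, HasDerivAt (fun s => exp (-θ * s ^ 2 / (4 * D)))
      (-(θ / (2 * D)) * s * exp (-θ * s ^ 2 / (4 * D))) s := fun s => by
    convert (((hasDerivAt_pow 2 s).const_mul (-θ)).div_const (4 * D)).exp using 1
    field_simp
    norm_num
    ring
  have hψ' : HasDerivAt (fun s => -(θ / (2 * D)) * s * exp (-θ * s ^ 2 / (4 * D)))
      (-(θ / (2 * D)) * exp (-θ * r ^ 2 / (4 * D))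
        + -(θ / (2 * D)) * r * (-(θ / (2 * D)) * r * exp (-θ * r ^ 2 / (4 * D)))) r :=
    (((hasDerivAt_id' r).const_mul _).mul (hψ r)).congr_deriv (by ring)
  have hexp : ∀ s, exp (s ^ 2 / (4 * D)) * exp (-θ * s ^ 2 / (4 * D))
      = exp ((1 - θ) * s ^ 2 / (4 * D)) := fun s => by
    rw [← exp_add]
    ring_nf
  refine ((h.hasDerivAt_wronskian hD hr (hψ r) hψ').congr_deriv ?_).congr_of_eventuallyEq
    (Eventually.of_forall fun s => ?_)
  · rw [← hexp, profileWeight]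
    field_simp
    ring
  · simp only [gaussFlux, ← hexp, profileWeight]
    field_simp
    ring

theorem hasDerivAt_gaussFlux_one (h : IsProfileSolution m D κ g φ φ') (hD : D ≠ 0) {r : ℝ}
    (hr : 0 < r) :
    HasDerivAt (gaussFlux m D 1 φ φ') (r ^ m * ((κ + (m + 1) / 2) * φ r + g r)) r := by
  simpa using h.hasDerivAt_gaussFlux hD 1 hr

theorem deriv_gaussFlux_one_pos (h : IsProfileSolution m D κ g φ φ')
    (hκ : -((m : ℝ) + 1) / 2 ≤ κ) {r : ℝ} (hr : 0 < r) :
    0 < r ^ m * ((κ + (m + 1) / 2) * φ r + g r) := by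
  have : 0 ≤ (κ + (m + 1) / 2) * φ r := mul_nonneg (by linarith) (h.pos r hr).le
  exact mul_pos (pow_pos hr m) (by linarith [h.forcing_pos r hr])

theorem gaussFlux_one_pos (h : IsProfileSolution m D κ g φ φ') (hD : 0 < D)
    (hκ : -((m : ℝ) + 1) / 2 ≤ κ) {r : ℝ} (hr : 0 < r) : 0 < gaussFlux m D 1 φ φ' r := by
  set F := gaussFlux m D 1 φ φ'
  have hmono : StrictMonoOn F (Ioi 0) := by
    refine strictMonoOn_of_hasDerivWithinAt_pos (convex_Ioi 0)
      (f' := fun s => s ^ m * ((κ + (m + 1) / 2) * φ s + g s))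
      (fun s hs => (h.hasDerivAt_gaussFlux_one hD.ne' hs).continuousAt.continuousWithinAt)
      (fun s hs => ?_) (fun s hs => ?_) <;> rw [interior_Ioi] at hs
    · exact (h.hasDerivAt_gaussFlux_one hD.ne' hs).hasDerivWithinAt
    · exact h.deriv_gaussFlux_one_pos hκ hs
  by_contra hneg
  set s₀ := min (r / 2) 1
  have hs₀ : 0 < s₀ := lt_min (by linarith) one_pos
  have hFs₀ : F s₀ < 0 :=
    (hmono hs₀ hr ((min_le_left _ _).trans_lt (by linarith))).trans_le (not_lt.1 hneg)
  -- near `0`, where `s^m ≤ 1`, the negative value `F s₀` bounds `D φ'` from above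
  have hbound : ∀ x ∈ Ioo 0 s₀, φ' x ≤ F s₀ / D := by
    intro x hx
    have hFx : x ^ m * (D * φ' x + x * φ x / 2) ≤ F s₀ :=
      gaussFlux_one m D φ φ' x ▸ hmono.monotoneOn hx.1 hs₀ hx.2.le
    have hxm : x ^ m ≤ 1 := pow_le_one₀ hx.1.le (hx.2.le.trans (min_le_right _ _))
    rw [le_div_iff₀ hD]
    nlinarith [pow_pos hx.1 m, mul_pos hx.1 (h.pos x hx.1)]
  have := h.hasDerivWithinAt_zero.le_of_forall_deriv_le hs₀ (fun x hx => h.hasDerivAt x hx.1)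
    hbound
  linarith [div_neg_of_neg_of_pos hFs₀ hD]

theorem exists_pos_eventually_le_gaussFlux_one (h : IsProfileSolution m D κ g φ φ')
    (hD : 0 < D) (hκ : -((m : ℝ) + 1) / 2 ≤ κ) :
    ∃ a > 0, ∀ᶠ s in atTop, a ≤ gaussFlux m D 1 φ φ' s :=
  exists_pos_eventually_le_of_frequently_pos
    ((eventually_gt_atTop 0).mono fun _ hs => h.hasDerivAt_gaussFlux_one hD.ne' hs)
    ((eventually_gt_atTop 0).mono fun _ hs => (h.deriv_gaussFlux_one_pos hκ hs).le)
    ((eventually_gt_atTop 0).mono fun _ hs => h.gaussFlux_one_pos hD hκ hs).frequently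

theorem hasDerivAt_mul_exp (h : IsProfileSolution m D κ g φ φ') (hD : D ≠ 0) {r : ℝ}
    (hr : 0 < r) :
    HasDerivAt (fun s => φ s * exp (s ^ 2 / (8 * D)))
      (exp (r ^ 2 / (8 * D)) * (D * φ' r + r * φ r / 4) / D) r :=
  ((h.hasDerivAt r hr).mul ((hasDerivAt_pow 2 r).div_const (8 * D)).exp).congr_deriv
    (by field_simp; ring)

theorem eventually_deriv_gaussFlux_half_nonneg (h : IsProfileSolution m D κ g φ φ')
    (hD : 0 < D) : ∀ᶠ s in atTop, 0 ≤ s ^ m * exp ((1 - 1 / 2) * s ^ 2 / (4 * D)) *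
      ((κ + 1 / 2 * (m + 1) / 2 + 1 / 2 * (1 - 1 / 2) * s ^ 2 / (4 * D)) * φ s + g s) := by
  filter_upwards [eventually_gt_atTop 0,
    (tendsto_pow_atTop two_ne_zero).eventually_ge_atTop (16 * D * |κ|)] with s hs hs2
  have hcoef : 0 ≤ κ + 1 / 2 * (m + 1) / 2 + 1 / 2 * (1 - 1 / 2) * s ^ 2 / (4 * D) := by
    have : |κ| ≤ s ^ 2 / (16 * D) := by rw [le_div_iff₀ (by positivity)]; linarith
    have : 1 / 2 * (1 - 1 / 2) * s ^ 2 / (4 * D) = s ^ 2 / (16 * D) := by ring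
    linarith [neg_abs_le κ, m.cast_nonneg (α := ℝ)]
  have := mul_nonneg hcoef (h.pos s hs).le
  have := h.forcing_pos s hs
  positivity

theorem frequently_gaussFlux_half_pos (h : IsProfileSolution m D κ g φ φ') (hD : 0 < D)
    (hκ : -((m : ℝ) + 1) / 2 ≤ κ) : ∃ᶠ s in atTop, 0 < gaussFlux m D (1 / 2) φ φ' s := by
  intro hneg
  have hflux : ∀ᶠ s in atTop, D * φ' s + s * φ s / 4 ≤ 0 := by
    filter_upwards [hneg, eventually_gt_atTop 0] with s hs hs0
    rw [gaussFlux_half] at hs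
    exact nonpos_of_mul_nonpos_right (not_lt.1 hs) (by positivity)
  obtain ⟨b, hb⟩ := exists_monotoneOn_Ici_of_eventually_deriv_nonneg
    ((eventually_gt_atTop 0).mono fun s hs => (h.hasDerivAt_mul_exp hD.ne' hs).neg)
    (hflux.mono fun s hs => by
      rw [neg_nonneg]
      exact div_nonpos_of_nonpos_of_nonneg (mul_nonpos_of_nonneg_of_nonpos (exp_pos _).le hs)
        hD.le)
  obtain ⟨a, ha, hF₁⟩ := h.exists_pos_eventually_le_gaussFlux_one hD hκ
  have hgrowth := (tendsto_rpow_mul_exp_sq_div_atTop (-((m : ℝ) + 1))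
    (by positivity : 0 < 8 * D)).eventually_gt_atTop (φ b * exp (b ^ 2 / (8 * D)) / (4 * a))
  obtain ⟨s, hs, hsF, hsflux, hsb, hs0⟩ := (hgrowth.and (hF₁.and (hflux.and
    ((eventually_ge_atTop b).and (eventually_gt_atTop 0))))).exists
  -- `a ≤ s^(m+1) φ(s) / 4` and `φ(s) exp (s² / (8D)) ≤ φ(b) exp (b² / (8D))` contradict `hs`
  have hMb : φ s * exp (s ^ 2 / (8 * D)) ≤ φ b * exp (b ^ 2 / (8 * D)) :=
    neg_le_neg_iff.1 (hb self_mem_Ici hsb hsb)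
  have hE := exp_pos (s ^ 2 / (8 * D))
  rw [rpow_neg hs0.le, show ((m : ℝ) + 1) = ((m + 1 : ℕ) : ℝ) by push_cast; ring, rpow_natCast,
    inv_mul_eq_div, lt_div_iff₀ (by positivity), div_mul_eq_mul_div,
    div_lt_iff₀ (by positivity)] at hs
  rw [gaussFlux_one] at hsF
  have : a ≤ s ^ (m + 1) * φ s / 4 := by
    rw [pow_succ]
    nlinarith [pow_pos hs0 m, h.pos s hs0]
  nlinarith [mul_le_mul_of_nonneg_left this hE.le,
    mul_le_mul_of_nonneg_left hMb (pow_pos hs0 (m + 1)).le]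

theorem exists_pos_eventually_le_mul_exp (h : IsProfileSolution m D κ g φ φ') (hD : 0 < D)
    (hκ : -((m : ℝ) + 1) / 2 ≤ κ) :
    ∃ c > 0, ∀ᶠ s in atTop, c ≤ φ s * exp (s ^ 2 / (8 * D)) := by
  obtain ⟨c, hc, hF₂⟩ := exists_pos_eventually_le_of_frequently_pos
    ((eventually_gt_atTop 0).mono fun s hs => h.hasDerivAt_gaussFlux hD.ne' (1 / 2) hs)
    (h.eventually_deriv_gaussFlux_half_nonneg hD) (h.frequently_gaussFlux_half_pos hD hκ)
  refine exists_pos_eventually_le_of_frequently_pos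
    ((eventually_gt_atTop 0).mono fun s hs => h.hasDerivAt_mul_exp hD.ne' hs) ?_
    ((eventually_gt_atTop 0).mono fun s hs => by have := h.pos s hs; positivity).frequently
  filter_upwards [hF₂, eventually_gt_atTop 0] with s hs hs0
  rw [gaussFlux_half] at hs
  have := nonneg_of_mul_nonneg_right (hc.le.trans hs) (by positivity)
  positivity

theorem eventually_wronskian_rpow_pos (h : IsProfileSolution m D κ g φ φ') (hD : 0 < D)
    (hκ : -((m : ℝ) + 1) / 2 ≤ κ) {η : ℝ} (hη : η < 2 * κ) :
    ∀ᶠ s in atTop, 0 < D * profileWeight m D s * (φ' s * s ^ η - φ s * (η * s ^ (η - 1))) := by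
  obtain ⟨c, hc, hlow⟩ := h.exists_pos_eventually_le_mul_exp hD hκ
  set k := (κ - η / 2) / 2
  have hk : 0 < k := by simp only [k]; linarith
  set Q : ℝ → ℝ := fun r => profileWeight m D r * ((κ * φ r + g r) * r ^ η
    - φ r * (D * (η * ((η - 1) * r ^ (η - 1 - 1))) + (m * D / r + r / 2) * (η * r ^ (η - 1))))
  have hQ_eq : ∀ r > 0, Q r = r ^ ((m : ℝ) + η) * exp (r ^ 2 / (8 * D))
      * (φ r * exp (r ^ 2 / (8 * D))) * (2 * k - D * η * (m + η - 1) / r ^ 2)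
      + profileWeight m D r * r ^ η * g r := fun r hr => by
    have hexp : exp (r ^ 2 / (4 * D)) = exp (r ^ 2 / (8 * D)) * exp (r ^ 2 / (8 * D)) := by
      rw [← exp_add]
      ring_nf
    simp only [Q, k, profileWeight, rpow_add hr, rpow_natCast, rpow_sub_one hr.ne', hexp]
    field_simp
    ring
  have hsmall : ∀ᶠ r in atTop, D * η * (m + η - 1) / r ^ 2 < k :=
    (tendsto_const_nhds.div_atTop (tendsto_pow_atTop two_ne_zero)).eventually (gt_mem_nhds hk)
  have hQ : Tendsto Q atTop atTop := by
    refine tendsto_atTop_mono' atTop ?_ ((tendsto_rpow_mul_exp_sq_div_atTop ((m : ℝ) + η)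
      (by positivity : 0 < 8 * D)).const_mul_atTop (mul_pos hk hc))
    filter_upwards [hlow, hsmall, eventually_gt_atTop 0] with r hr hsmall hr0
    rw [hQ_eq r hr0]
    have hg := mul_pos (mul_pos (profileWeight_pos m D hr0) (rpow_pos_of_pos hr0 η))
      (h.forcing_pos r hr0)
    set A := r ^ ((m : ℝ) + η) * exp (r ^ 2 / (8 * D))
    have hA : 0 < A := by positivity
    calc k * c * A ≤ A * (φ r * exp (r ^ 2 / (8 * D))) * k := by
          nlinarith [mul_le_mul_of_nonneg_left hr hA.le]
      _ ≤ A * (φ r * exp (r ^ 2 / (8 * D))) * (2 * k - D * η * (m + η - 1) / r ^ 2) :=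
          mul_le_mul_of_nonneg_left (by linarith) (mul_pos hA (hc.trans_le hr)).le
      _ ≤ _ := le_add_of_nonneg_right hg.le
  refine (tendsto_atTop_of_deriv_tendsto_atTop ((eventually_gt_atTop 0).mono fun r hr => ?_)
    hQ).eventually_gt_atTop 0
  exact h.hasDerivAt_wronskian hD.ne' hr (hasDerivAt_rpow_const (Or.inl hr.ne'))
    ((hasDerivAt_rpow_const (Or.inl hr.ne')).const_mul η)

theorem exists_pos_eventually_rpow_le (h : IsProfileSolution m D κ g φ φ') (hD : 0 < D)
    (hκ : -((m : ℝ) + 1) / 2 ≤ κ) {η : ℝ} (hη : η < 2 * κ) :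
    ∃ C > 0, ∀ᶠ s in atTop, C * s ^ η ≤ φ s := by
  obtain ⟨C, hC, hle⟩ := exists_pos_eventually_le_of_frequently_pos (f := fun s => φ s / s ^ η)
    ((eventually_gt_atTop 0).mono fun s hs => (h.hasDerivAt s hs).div
      (hasDerivAt_rpow_const (Or.inl hs.ne')) (rpow_pos_of_pos hs η).ne')
    ((h.eventually_wronskian_rpow_pos hD hκ hη).and (eventually_gt_atTop 0) |>.mono
      fun s ⟨hW, hs⟩ => by
        have := pos_of_mul_pos_right hW (mul_pos hD (profileWeight_pos m D hs)).le
        positivity)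
    ((eventually_gt_atTop 0).mono fun s hs => by have := h.pos s hs; positivity).frequently
  refine ⟨C, hC, ?_⟩
  filter_upwards [hle, eventually_gt_atTop 0] with s hs hs0
  rwa [le_div_iff₀ (rpow_pos_of_pos hs0 η)] at hs

end IsProfileSolution

theorem stmt15_general
    (N : ℕ) (Du Dv lam q κ : ℝ)
    (hDv : 0 < Dv) (hlam : 0 < lam)
    (hκ₁ : -(N : ℝ) / 2 ≤ κ)
    (ρ : ℝ → ℝ) (hρ : ∀ r : ℝ, ρ r = r ^ (N - 1) * Real.exp (r ^ 2 / (4 * Dv)))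
    (φ dφ : ℝ → ℝ)
    (hpos : ∀ r ∈ Ici (0:ℝ), 0 < φ r)
    (hφ' : ∀ r ∈ Ici (0:ℝ), HasDerivWithinAt φ (dφ r) (Ici 0) r)
    (hODE : ∀ r ∈ Ioi (0:ℝ), HasDerivAt (fun s => Dv * (ρ s * dφ s))
      (κ * ρ r * φ r + lam * ρ r * Real.exp (-(r ^ 2) / (4 * Du)) * φ r ^ q) r)
    (hdφ0 : dφ 0 = 0) :
    ∀ η : ℝ, η < 2 * κ → ∃ C > 0, ∃ R > 0, ∀ r : ℝ, R ≤ r → C * r ^ η < φ r := by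
  intro η hη
  obtain rfl : ρ = profileWeight (N - 1) Dv := funext hρ
  have h : IsProfileSolution (N - 1) Dv κ (fun r => lam * exp (-(r ^ 2) / (4 * Du)) * φ r ^ q)
      φ dφ :=
    { pos := fun r hr => hpos r (mem_Ici.2 hr.le)
      forcing_pos := fun r hr => by have := hpos r (mem_Ici.2 hr.le); positivity
      hasDerivWithinAt_zero := by simpa [hdφ0] using hφ' 0 self_mem_Ici
      hasDerivAt := fun r hr => (hφ' r (mem_Ici.2 hr.le)).hasDerivAt (Ici_mem_nhds hr)
      ode := fun r hr => (hODE r hr).congr_deriv (by ring) }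
  have hκ : -(((N - 1 : ℕ) : ℝ) + 1) / 2 ≤ κ := by
    have : (N : ℝ) ≤ ((N - 1 : ℕ) : ℝ) + 1 := by norm_cast; omega
    linarith
  obtain ⟨C, hC, hle⟩ := h.exists_pos_eventually_rpow_le hDv hκ hη
  obtain ⟨R, hR⟩ := eventually_atTop.1 (hle.and (eventually_gt_atTop 0))
  refine ⟨C / 2, half_pos hC, max R 1, lt_max_of_lt_right one_pos, fun r hr => ?_⟩
  obtain ⟨hCr, hr0⟩ := hR r (le_of_max_le_left hr)
  nlinarith [rpow_pos_of_pos hr0 η]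

/-- Let `φ` be a positive C² global solution of the profile equation with
`−N/2 ≤ κ < 0`. Then for every `η < 2κ` there are `C > 0` and `R > 0` such that
`φ(r) > C r^η` for all `r ≥ R`. -/
theorem stmt15
    (N : ℕ) (hN : 1 ≤ N) (Du Dv lam q κ : ℝ)
    (hDu : 0 < Du) (hDv : 0 < Dv) (hlam : 0 < lam) (hq : 1 ≤ q)
    (hκ₁ : -(N : ℝ) / 2 ≤ κ) (hκ₂ : κ < 0)
    (ρ : ℝ → ℝ) (hρ : ∀ r : ℝ, ρ r = r ^ (N - 1) * Real.exp (r ^ 2 / (4 * Dv)))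
    (φ dφ : ℝ → ℝ)
    (hpos : ∀ r ∈ Ici (0:ℝ), 0 < φ r)
    (hφ' : ∀ r ∈ Ici (0:ℝ), HasDerivWithinAt φ (dφ r) (Ici 0) r)
    (hODE : ∀ r ∈ Ioi (0:ℝ), HasDerivAt (fun s => Dv * (ρ s * dφ s))
      (κ * ρ r * φ r + lam * ρ r * Real.exp (-(r ^ 2) / (4 * Du)) * φ r ^ q) r)
    (hφ0 : φ 0 = 1) (hdφ0 : dφ 0 = 0) :
    ∀ η : ℝ, η < 2 * κ → ∃ C > 0, ∃ R > 0, ∀ r : ℝ, R ≤ r → C * r ^ η < φ r :=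
  stmt15_general N Du Dv lam q κ hDv hlam hκ₁ ρ hρ φ dφ hpos hφ' hODE hdφ0
end

section
/- Let N ≥ 1 be an integer, D_u, D_v, λ > 0, q ≥ 1 and −N/2 ≤ κ < 0, and set ρ(r) = r^{N−1} e^{r²/(4D_v)}. Let φ : [0,∞) → ℝ be a positive C² solution of D_v (ρ φ')' = κ ρ φ + λ ρ e^{−r²/(4D_u)} φ^q on (0,∞) with φ(0) = 1, φ'(0) = 0, and assume there exist constants C₁, C₂ > 0 and r₂ > 1 such that C₁ r^{2κ−1/8} < φ(r) < C₂ r^{2κ+1/8} and φ'(r) < 0 for all r ≥ r₂. Then there exist C* > 0 and R > 0 such that φ(r) ≥ C* r^{2κ} for all r ≥ R. -/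
/-!
Put `w(r) = r^{-2κ} φ(r)`. The energy `H = r^{2κ} ρ φ' - 2κ r^{2κ-1} ρ φ` equals `r^{4κ} ρ w'`,
and along solutions of the profile equation
`H' = r^{2κ} ρ f / D_v - 2κ(2κ + N - 2) r^{2κ-2} ρ φ`, where `f ≥ 0` is the nonlinear source.
The upper sandwich bound turns this into `H' ≥ -K r^{4κ-2+1/8} ρ`. Since the derivative of a
Gaussian weight `r^p e^{r²/(4D_v)}` is essentially `r/(2D_v)` times the weight, integration gives
`H ≥ -C r^{4κ-3+1/8} ρ`, that is `w' ≥ -C r^{-23/8}`, for large `r`. Hence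
`w(r) ≥ w(R) - (8C/15) R^{-15/8}`, and for `R` large the lower sandwich bound
`w(R) ≥ C₁ R^{-1/8}` dominates the error term.
-/

open Real Set Filter Topology

lemma sub_le_sub_of_hasDerivAt_le {f g f' g' : ℝ → ℝ} {s a b : ℝ}
    (hf : ∀ x ≥ s, HasDerivAt f (f' x) x) (hg : ∀ x ≥ s, HasDerivAt g (g' x) x)
    (hle : ∀ x ≥ s, g' x ≤ f' x) (hsa : s ≤ a) (hab : a ≤ b) :
    g b - g a ≤ f b - f a := by
  have hmono : MonotoneOn (f - g) (Ici s) := by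
    refine monotoneOn_of_hasDerivWithinAt_nonneg (f' := f' - g') (convex_Ici s)
      (fun x hx => ((hf x hx).sub (hg x hx)).continuousAt.continuousWithinAt)
      (fun x hx => ?_) (fun x hx => ?_) <;> rw [interior_Ici] at hx
    · exact ((hf x hx.le).sub (hg x hx.le)).hasDerivWithinAt
    · exact sub_nonneg.mpr (hle x hx.le)
  have := hmono hsa (hsa.trans hab) hab
  simp only [Pi.sub_apply] at this
  linarith

noncomputable def gaussWeight (p D r : ℝ) : ℝ := r ^ p * exp (r ^ 2 / (4 * D))

section GaussWeight

variable {p D r : ℝ}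

lemma gaussWeight_pos (hr : 0 < r) : 0 < gaussWeight p D r := by
  unfold gaussWeight; positivity

lemma rpow_mul_gaussWeight (hr : 0 < r) (a : ℝ) :
    r ^ a * gaussWeight p D r = gaussWeight (a + p) D r := by
  simp only [gaussWeight, rpow_add hr, mul_assoc]

lemma hasDerivAt_gaussWeight (hr : r ≠ 0) :
    HasDerivAt (gaussWeight p D) ((p / r + r / (2 * D)) * gaussWeight p D r) r := by
  have := (hasDerivAt_rpow_const (p := p) (Or.inl hr)).mul
    (((hasDerivAt_pow 2 r).div_const (4 * D)).exp)
  refine this.congr_deriv ?_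
  rw [gaussWeight, rpow_sub_one hr]
  field_simp
  ring

lemma mul_gaussWeight_le_deriv (hD : 0 < D) (hr : 0 < r) (hpr : 4 * D * |p| ≤ r ^ 2) :
    r * gaussWeight p D r / (4 * D) ≤ (p / r + r / (2 * D)) * gaussWeight p D r := by
  rw [div_eq_mul_inv, mul_right_comm]
  refine mul_le_mul_of_nonneg_right ?_ (gaussWeight_pos hr).le
  rw [← sub_nonneg]
  have : 0 ≤ 4 * D * p + r ^ 2 := by nlinarith [neg_abs_le p]
  convert div_nonneg this (by positivity : (0 : ℝ) ≤ 4 * D * r) using 1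
  field_simp
  ring

lemma tendsto_gaussWeight_atTop (p : ℝ) (hD : 0 < D) :
    Tendsto (gaussWeight p D) atTop atTop := by
  have hb : 0 < (4 * D)⁻¹ := by positivity
  refine tendsto_atTop_mono' _ ?_ (tendsto_exp_mul_div_rpow_atTop (-p) _ hb)
  filter_upwards [eventually_ge_atTop 1] with r hr
  rw [gaussWeight, rpow_neg (by linarith), div_inv_eq_mul, mul_comm]
  gcongr
  rw [inv_mul_eq_div]
  gcongr
  nlinarith

end GaussWeight

lemma exists_neg_mul_gaussWeight_le_of_deriv_ge {f f' : ℝ → ℝ} {K p D : ℝ} (hD : 0 < D)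
    (hK : 0 ≤ K)
    (hf : ∀ᶠ r in atTop, HasDerivAt f (f' r) r ∧ -(K * (r * gaussWeight p D r)) ≤ f' r) :
    ∃ C ≥ 0, ∀ᶠ r in atTop, -(C * gaussWeight p D r) ≤ f r := by
  have hDK : 0 ≤ 4 * D * K := mul_nonneg (by positivity) hK
  obtain ⟨s₁, hs₁⟩ := eventually_atTop.mp hf
  set s := max s₁ (max 1 √(4 * D * |p|))
  have hs_pos : ∀ x ≥ s, 0 < x := fun x hx => by
    linarith [le_max_left 1 √(4 * D * |p|), le_max_right s₁ (max 1 √(4 * D * |p|))]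
  have hs_sq : ∀ x ≥ s, 4 * D * |p| ≤ x ^ 2 := fun x hx => by
    have : √(4 * D * |p|) ≤ x :=
      (le_max_right _ _).trans ((le_max_right _ _).trans hx)
    exact (sqrt_le_left (hs_pos x hx).le).mp this
  have hderiv :
      ∀ x ≥ s, -(4 * D * K) * ((p / x + x / (2 * D)) * gaussWeight p D x) ≤ f' x := by
    intro x hx
    have hle := mul_gaussWeight_le_deriv hD (hs_pos x hx) (hs_sq x hx)
    have : K * (x * gaussWeight p D x) = 4 * D * K * (x * gaussWeight p D x / (4 * D)) := by
      field_simp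
    linarith [mul_le_mul_of_nonneg_left hle hDK, (hs₁ x ((le_max_left _ _).trans hx)).2]
  have hcomp : ∀ r ≥ s, f s + 4 * D * K * gaussWeight p D s - 4 * D * K * gaussWeight p D r
      ≤ f r := by
    intro r hr
    have := sub_le_sub_of_hasDerivAt_le (g := fun x => -(4 * D * K) * gaussWeight p D x)
      (fun x hx => (hs₁ x ((le_max_left _ _).trans hx)).1)
      (fun x hx => (hasDerivAt_gaussWeight (hs_pos x hx).ne').const_mul _) hderiv le_rfl hr
    linarith
  refine ⟨4 * D * K + 1, by linarith, ?_⟩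
  filter_upwards [eventually_ge_atTop s,
    (tendsto_gaussWeight_atTop p hD).eventually_ge_atTop |f s + 4 * D * K * gaussWeight p D s|]
    with r hr hbig
  linarith [hcomp r hr, neg_abs_le (f s + 4 * D * K * gaussWeight p D s)]

lemma eventually_forall_sub_rpow_le_of_deriv_ge {f f' : ℝ → ℝ} {C p : ℝ} (hC : 0 ≤ C)
    (hp : 0 < p)
    (hf : ∀ᶠ r in atTop, HasDerivAt f (f' r) r ∧ -(C * r ^ (-(p + 1))) ≤ f' r) :
    ∀ᶠ R in atTop, ∀ r ≥ R, f R - C / p * R ^ (-p) ≤ f r := by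
  obtain ⟨s, hs⟩ := eventually_atTop.mp hf
  filter_upwards [eventually_ge_atTop (max s 1)] with R hR r hr
  have hpos : ∀ x ≥ max s 1, 0 < x := fun x hx => by linarith [le_max_right s 1]
  have hderiv : ∀ x ≥ max s 1, C / p * (-p * x ^ (-p - 1)) ≤ f' x := fun x hx => by
    convert (hs x ((le_max_left _ _).trans hx)).2 using 1
    field_simp
    ring_nf
  have := sub_le_sub_of_hasDerivAt_le (g := fun x => C / p * x ^ (-p))
    (fun x hx => (hs x ((le_max_left _ _).trans hx)).1)
    (fun x hx => (hasDerivAt_rpow_const (Or.inl (hpos x hx).ne')).const_mul _) hderiv hR hr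
  have : 0 ≤ C / p * r ^ (-p) := by
    have := rpow_pos_of_pos (hpos r (hR.trans hr)) (-p)
    positivity
  linarith

lemma exists_pos_eventually_le_of_deriv_ge {f f' : ℝ → ℝ} {B C p ε : ℝ} (hB : 0 < B)
    (hC : 0 ≤ C) (hp : 0 < p) (hεp : ε < p)
    (hf : ∀ᶠ r in atTop, HasDerivAt f (f' r) r ∧ -(C * r ^ (-(p + 1))) ≤ f' r)
    (hlow : ∀ᶠ r in atTop, B * r ^ (-ε) ≤ f r) :
    ∃ c > 0, ∀ᶠ r in atTop, c ≤ f r := by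
  have hsmall : ∀ᶠ R in atTop, C / p * R ^ (-p) ≤ B / 2 * R ^ (-ε) := by
    have := ((tendsto_rpow_neg_atTop (sub_pos.mpr hεp)).const_mul (C / p)).eventually_le_const
      (show C / p * 0 < B / 2 by simpa using hB)
    filter_upwards [this, eventually_gt_atTop 0] with R hR hR0
    calc C / p * R ^ (-p) = C / p * R ^ (-(p - ε)) * R ^ (-ε) := by
          rw [mul_assoc, ← rpow_add hR0]; ring_nf
      _ ≤ B / 2 * R ^ (-ε) := by gcongr
  obtain ⟨R, hR_tail, hR_low, hR_small, hR_pos⟩ := (eventually_forall_sub_rpow_le_of_deriv_ge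
    hC hp hf |>.and (hlow.and (hsmall.and (eventually_gt_atTop 0)))).exists
  refine ⟨B / 2 * R ^ (-ε), by positivity, eventually_atTop.mpr ⟨R, fun r hr => ?_⟩⟩
  linarith [hR_tail r hr]

lemma exists_pos_forall_mul_rpow_le {φ : ℝ → ℝ} {a c : ℝ}
    (h : ∀ᶠ r in atTop, c ≤ r ^ (-a) * φ r) :
    ∃ R > 0, ∀ r, R ≤ r → c * r ^ a ≤ φ r := by
  obtain ⟨R, hR⟩ := eventually_atTop.mp h
  refine ⟨max R 1, by positivity, fun r hr => ?_⟩
  have hr0 : 0 < r := by linarith [le_max_right R 1]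
  calc c * r ^ a ≤ r ^ (-a) * φ r * r ^ a := by gcongr; exact hR r ((le_max_left _ _).trans hr)
    _ = φ r := by rw [mul_right_comm, ← rpow_add hr0]; simp

noncomputable def profileEnergy (κ : ℝ) (ρ φ dφ : ℝ → ℝ) (r : ℝ) : ℝ :=
  r ^ (2 * κ) * (ρ r * dφ r) - 2 * κ * r ^ (2 * κ - 1) * ρ r * φ r

section ProfileEnergy

variable {c C D κ p r : ℝ} {ρ φ dφ f : ℝ → ℝ}

lemma profileEnergy_eq (hr : 0 < r) :
    profileEnergy κ ρ φ dφ r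
      = r ^ (4 * κ) * ρ r
        * (-(2 * κ) * r ^ (-(2 * κ) - 1) * φ r + r ^ (-(2 * κ)) * dφ r) := by
  have h₁ : r ^ (4 * κ) * r ^ (-(2 * κ) - 1) = r ^ (2 * κ - 1) := by
    rw [← rpow_add hr]; ring_nf
  have h₂ : r ^ (4 * κ) * r ^ (-(2 * κ)) = r ^ (2 * κ) := by
    rw [← rpow_add hr]; ring_nf
  rw [profileEnergy]
  linear_combination (-(2 * κ) * ρ r * φ r) * h₁.symm + ρ r * dφ r * h₂.symm

lemma hasDerivAt_profileEnergy (hD : D ≠ 0) (hr : 0 < r) (hφ : HasDerivAt φ (dφ r) r)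
    (hODE : HasDerivAt (fun s => D * (gaussWeight c D s * dφ s))
      (κ * gaussWeight c D r * φ r + gaussWeight c D r * f r) r) :
    HasDerivAt (profileEnergy κ (gaussWeight c D) φ dφ)
      (r ^ (2 * κ) * gaussWeight c D r * f r / D
        - 2 * κ * (2 * κ - 1 + c) * r ^ (2 * κ - 2) * gaussWeight c D r * φ r) r := by
  have hflux := hODE.const_mul D⁻¹
  simp only [← mul_assoc, inv_mul_cancel₀ hD, one_mul] at hflux
  have h₁ := hasDerivAt_rpow_const (p := 2 * κ) (Or.inl hr.ne')
  have h₂ := hasDerivAt_rpow_const (p := 2 * κ - 1) (Or.inl hr.ne')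
  refine ((h₁.mul hflux).sub (((h₂.const_mul (2 * κ)).mul
    (hasDerivAt_gaussWeight hr.ne')).mul hφ)).congr_deriv ?_
  have e₁ : r ^ (2 * κ - 1) = r ^ (2 * κ) / r := rpow_sub_one hr.ne' _
  have e₂ : r ^ (2 * κ - 1 - 1) = r ^ (2 * κ) / r ^ 2 := by
    rw [rpow_sub_one hr.ne', e₁]; ring
  have e₃ : r ^ (2 * κ - 2) = r ^ (2 * κ) / r ^ 2 := by rw [rpow_sub hr, rpow_two]
  simp only [Pi.mul_apply, e₁, e₂, e₃]
  field_simp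
  ring

lemma neg_mul_rpow_le_of_le_profileEnergy (hr : 0 < r)
    (h : -(C * gaussWeight p D r) ≤ profileEnergy κ (gaussWeight c D) φ dφ r) :
    -(C * r ^ (p - 4 * κ - c))
      ≤ -(2 * κ) * r ^ (-(2 * κ) - 1) * φ r + r ^ (-(2 * κ)) * dφ r := by
  have hw : 0 < r ^ (4 * κ) * gaussWeight c D r := by
    have := gaussWeight_pos (p := c) (D := D) hr
    positivity
  have hp : gaussWeight p D r = r ^ (4 * κ) * gaussWeight c D r * r ^ (p - 4 * κ - c) := by
    rw [mul_comm, ← mul_assoc, ← rpow_add hr, rpow_mul_gaussWeight hr]; ring_nf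
  rw [profileEnergy_eq hr, hp] at h
  refine le_of_mul_le_mul_left ?_ hw
  linarith

lemma neg_mul_le_deriv_profileEnergy {C₂ σ : ℝ} (hD : 0 < D) (hr : 0 < r) (hf : 0 ≤ f r)
    (hφ : 0 ≤ φ r) (hup : φ r ≤ C₂ * r ^ σ) :
    -(|2 * κ * (2 * κ - 1 + c)| * C₂ * (r * gaussWeight (2 * κ - 3 + σ + c) D r))
      ≤ r ^ (2 * κ) * gaussWeight c D r * f r / D
        - 2 * κ * (2 * κ - 1 + c) * r ^ (2 * κ - 2) * gaussWeight c D r * φ r := by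
  have hρ := gaussWeight_pos (p := c) (D := D) hr
  have hsource : 0 ≤ r ^ (2 * κ) * gaussWeight c D r * f r / D := by positivity
  have hweight : r ^ (2 * κ - 2) * gaussWeight c D r * r ^ σ
      = r * gaussWeight (2 * κ - 3 + σ + c) D r := by
    have := rpow_mul_gaussWeight (p := 2 * κ - 3 + σ + c) (D := D) hr 1
    rw [rpow_one] at this
    rw [this, mul_right_comm, ← rpow_add hr, rpow_mul_gaussWeight hr]
    ring_nf
  calc -(|2 * κ * (2 * κ - 1 + c)| * C₂ * (r * gaussWeight (2 * κ - 3 + σ + c) D r))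
      = -(|2 * κ * (2 * κ - 1 + c)| * (r ^ (2 * κ - 2) * gaussWeight c D r)
          * (C₂ * r ^ σ)) := by
        rw [← hweight]; ring
    _ ≤ -(|2 * κ * (2 * κ - 1 + c)| * (r ^ (2 * κ - 2) * gaussWeight c D r) * φ r) := by
        gcongr
    _ ≤ -(2 * κ * (2 * κ - 1 + c) * (r ^ (2 * κ - 2) * gaussWeight c D r) * φ r) := by
        gcongr
        exact le_abs_self _
    _ ≤ _ := by linarith

lemma exists_neg_mul_rpow_le_deriv_of_profileEquation {C₂ σ : ℝ} (hD : 0 < D)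
    (hC₂ : 0 ≤ C₂)
    (hφ : ∀ᶠ r in atTop, HasDerivAt φ (dφ r) r)
    (hODE : ∀ᶠ r in atTop, HasDerivAt (fun s => D * (gaussWeight c D s * dφ s))
      (κ * gaussWeight c D r * φ r + gaussWeight c D r * f r) r)
    (hf : ∀ᶠ r in atTop, 0 ≤ f r) (hφ_nonneg : ∀ᶠ r in atTop, 0 ≤ φ r)
    (hup : ∀ᶠ r in atTop, φ r ≤ C₂ * r ^ σ) :
    ∃ C ≥ 0, ∀ᶠ r in atTop, HasDerivAt (fun s => s ^ (-(2 * κ)) * φ s)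
        (-(2 * κ) * r ^ (-(2 * κ) - 1) * φ r + r ^ (-(2 * κ)) * dφ r) r
      ∧ -(C * r ^ (σ - 2 * κ - 3))
        ≤ -(2 * κ) * r ^ (-(2 * κ) - 1) * φ r + r ^ (-(2 * κ)) * dφ r := by
  obtain ⟨C, hC, henergy⟩ := exists_neg_mul_gaussWeight_le_of_deriv_ge hD
    (mul_nonneg (abs_nonneg (2 * κ * (2 * κ - 1 + c))) hC₂) <| by
    filter_upwards [hφ, hODE, hf, hφ_nonneg, hup, eventually_gt_atTop 0]
      with r hφr hODEr hfr hφr_nonneg hupr hr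
    exact ⟨hasDerivAt_profileEnergy hD.ne' hr hφr hODEr,
      neg_mul_le_deriv_profileEnergy hD hr hfr hφr_nonneg hupr⟩
  refine ⟨C, hC, ?_⟩
  filter_upwards [henergy, hφ, eventually_gt_atTop 0] with r hr hφr hr0
  refine ⟨(hasDerivAt_rpow_const (Or.inl hr0.ne')).mul hφr, ?_⟩
  convert neg_mul_rpow_le_of_le_profileEnergy hr0 hr using 4
  ring

end ProfileEnergy

theorem stmt16_general
    (N : ℕ) (Du Dv lam q κ : ℝ)
    (hDv : 0 < Dv) (hlam : 0 < lam)
    (ρ : ℝ → ℝ) (hρ : ∀ r : ℝ, ρ r = r ^ (N - 1) * Real.exp (r ^ 2 / (4 * Dv)))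
    (φ dφ : ℝ → ℝ)
    (hpos : ∀ r ∈ Ici (0:ℝ), 0 < φ r)
    (hφ' : ∀ r ∈ Ici (0:ℝ), HasDerivWithinAt φ (dφ r) (Ici 0) r)
    (hODE : ∀ r ∈ Ioi (0:ℝ), HasDerivAt (fun s => Dv * (ρ s * dφ s))
      (κ * ρ r * φ r + lam * ρ r * Real.exp (-(r ^ 2) / (4 * Du)) * φ r ^ q) r)
    (C₁ C₂ r₂ : ℝ) (hC₁ : 0 < C₁) (hC₂ : 0 < C₂)
    (hlow : ∀ r : ℝ, r₂ ≤ r → C₁ * r ^ (2 * κ - 1/8) < φ r)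
    (hup : ∀ r : ℝ, r₂ ≤ r → φ r < C₂ * r ^ (2 * κ + 1/8)) :
    ∃ Cstar > 0, ∃ R > 0, ∀ r : ℝ, R ≤ r → Cstar * r ^ (2 * κ) ≤ φ r := by
  set c : ℝ := ((N - 1 : ℕ) : ℝ)
  obtain rfl : ρ = gaussWeight c Dv := funext fun s => by rw [hρ, gaussWeight, rpow_natCast]
  have hφ : ∀ᶠ r in atTop, HasDerivAt φ (dφ r) r := by
    filter_upwards [eventually_gt_atTop 0] with r hr
    exact (hφ' r hr.le).hasDerivAt (Ici_mem_nhds hr)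
  have hsource : ∀ᶠ r in atTop, 0 ≤ lam * exp (-(r ^ 2) / (4 * Du)) * φ r ^ q := by
    filter_upwards [eventually_ge_atTop 0] with r hr
    have := rpow_pos_of_pos (hpos r hr) q
    positivity
  obtain ⟨C, hC, hw⟩ := exists_neg_mul_rpow_le_deriv_of_profileEquation (σ := 2 * κ + 1 / 8)
    (f := fun s => lam * exp (-(s ^ 2) / (4 * Du)) * φ s ^ q) hDv hC₂.le hφ
    (by filter_upwards [eventually_gt_atTop 0] with r hr
        exact (hODE r hr).congr_deriv (by ring))
    hsource (by filter_upwards [eventually_ge_atTop 0] with r hr using (hpos r hr).le)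
    (by filter_upwards [eventually_ge_atTop r₂] with r hr using (hup r hr).le)
  rw [show 2 * κ + 1 / 8 - 2 * κ - 3 = -(15 / 8 + 1 : ℝ) by ring] at hw
  have hw_low : ∀ᶠ r in atTop, C₁ * r ^ (-(1 / 8 : ℝ)) ≤ r ^ (-(2 * κ)) * φ r := by
    filter_upwards [eventually_ge_atTop r₂, eventually_gt_atTop 0] with r hr hr0
    have := mul_le_mul_of_nonneg_left (hlow r hr).le (rpow_pos_of_pos hr0 (-(2 * κ))).le
    rwa [mul_left_comm, ← rpow_add hr0,
      show -(2 * κ) + (2 * κ - 1 / 8) = -(1 / 8 : ℝ) by ring] at this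
  obtain ⟨Cstar, hCstar, hw_ge⟩ :=
    exists_pos_eventually_le_of_deriv_ge hC₁ hC (by norm_num) (by norm_num) hw hw_low
  exact ⟨Cstar, hCstar, exists_pos_forall_mul_rpow_le hw_ge⟩

/-- Let `φ` be a positive C² global solution of the profile equation with
`−N/2 ≤ κ < 0`, satisfying the sandwich bounds
`C₁ r^{2κ−1/8} < φ(r) < C₂ r^{2κ+1/8}` and `φ'(r) < 0` for `r ≥ r₂ > 1`. Then there
are `C* > 0` and `R > 0` with `φ(r) ≥ C* r^{2κ}` for all `r ≥ R`. -/
theorem stmt16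
    (N : ℕ) (hN : 1 ≤ N) (Du Dv lam q κ : ℝ)
    (hDu : 0 < Du) (hDv : 0 < Dv) (hlam : 0 < lam) (hq : 1 ≤ q)
    (hκ₁ : -(N : ℝ) / 2 ≤ κ) (hκ₂ : κ < 0)
    (ρ : ℝ → ℝ) (hρ : ∀ r : ℝ, ρ r = r ^ (N - 1) * Real.exp (r ^ 2 / (4 * Dv)))
    (φ dφ : ℝ → ℝ)
    (hpos : ∀ r ∈ Ici (0:ℝ), 0 < φ r)
    (hφ' : ∀ r ∈ Ici (0:ℝ), HasDerivWithinAt φ (dφ r) (Ici 0) r)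
    (hODE : ∀ r ∈ Ioi (0:ℝ), HasDerivAt (fun s => Dv * (ρ s * dφ s))
      (κ * ρ r * φ r + lam * ρ r * Real.exp (-(r ^ 2) / (4 * Du)) * φ r ^ q) r)
    (hφ0 : φ 0 = 1) (hdφ0 : dφ 0 = 0)
    (C₁ C₂ r₂ : ℝ) (hC₁ : 0 < C₁) (hC₂ : 0 < C₂) (hr₂ : 1 < r₂)
    (hlow : ∀ r : ℝ, r₂ ≤ r → C₁ * r ^ (2 * κ - 1/8) < φ r)
    (hup : ∀ r : ℝ, r₂ ≤ r → φ r < C₂ * r ^ (2 * κ + 1/8))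
    (hdec : ∀ r : ℝ, r₂ ≤ r → dφ r < 0) :
    ∃ Cstar > 0, ∃ R > 0, ∀ r : ℝ, R ≤ r → Cstar * r ^ (2 * κ) ≤ φ r :=
  stmt16_general N Du Dv lam q κ hDv hlam ρ hρ φ dφ hpos hφ' hODE C₁ C₂ r₂ hC₁ hC₂ hlow hup
end

section
/- Let N ≥ 1 be an integer, B > 0, κ < −N/2, and let φ : [0,∞) → ℝ be a continuous positive bounded-near-zero function with ∫₀^∞ r^{−2κ−1} φ(r) dr < ∞. For t > 0 define v(x,t) = B t^{κ} φ(|x|/√t) for x ∈ ℝ^N, and set M₁ = B ω_{N−1} ∫₀^∞ r^{−2κ−1} φ(r) dr, where ω_{N−1} is the surface measure of the unit sphere in ℝ^N. Then for every bounded continuous function f : ℝ^N → ℝ, ∫_{ℝ^N} |x|^{−2κ−N} v(x,t) f(x) dx → M₁ f(0) as t → 0⁺; that is, |x|^{−2κ−N} v(x,t) → M₁ δ₀ in the sense of distributions as t → 0⁺ (note −2κ−N > 0, so v itself is more singular at the origin than the fundamental solution: v is 'very singular'). -/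
open Real Set MeasureTheory Filter Topology

/-!
With `p = -2κ - N`, the substitution `x = √t • y` turns `∫ ‖x‖ ^ p v(x,t) f(x) dx` into
`B ∫ H(y) f(√t • y) dy` with `H(y) = ‖y‖ ^ p φ(‖y‖)`: the powers of `t` cancel exactly because
`κ + (N + p)/2 = 0`. In polar coordinates `H` is integrable with `∫ H = ω_{N-1} ∫₀^∞ r^{-2κ-1} φ(r) dr`,
so dominated convergence (with majorant `K |H|`) gives the limit `B (∫ H) f(0) = M₁ f(0)`.
-/

theorem eqOn_pow_pred_smul_rpow_mul {n : ℕ} (hn : 1 ≤ n) (p : ℝ) (φ : ℝ → ℝ) :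
    EqOn (fun r : ℝ => r ^ (n - 1) • (r ^ p * φ r)) (fun r => r ^ ((n : ℝ) - 1 + p) * φ r)
      (Ioi 0) := fun r (hr : 0 < r) => by
  simp only [smul_eq_mul, ← mul_assoc, ← Real.rpow_natCast, ← Real.rpow_add hr, Nat.cast_sub hn,
    Nat.cast_one]

section Radial

variable {E : Type*} [NormedAddCommGroup E] [NormedSpace ℝ E] [FiniteDimensional ℝ E]
  [MeasurableSpace E] [BorelSpace E] (μ : Measure E) [μ.IsAddHaarMeasure] (p : ℝ) (φ : ℝ → ℝ)

theorem integral_norm_rpow_mul_comp_norm_div {s : ℝ} (hs : 0 < s) (f : E → ℝ) :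
    ∫ x, ‖x‖ ^ p * φ (‖x‖ / s) * f x ∂μ
      = s ^ ((Module.finrank ℝ E : ℝ) + p) * ∫ y, ‖y‖ ^ p * φ ‖y‖ * f (s • y) ∂μ := by
  set F : E → ℝ := fun x => ‖x‖ ^ p * φ (‖x‖ / s) * f x
  have hF : ∀ y, F (s • y) = s ^ p * (‖y‖ ^ p * φ ‖y‖ * f (s • y)) := fun y => by
    simp only [F, norm_smul, Real.norm_eq_abs, abs_of_pos hs,
      Real.mul_rpow hs.le (norm_nonneg y), mul_div_cancel_left₀ _ hs.ne']
    ring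
  have hscale := Measure.integral_comp_smul_of_nonneg μ F s (hR := hs.le)
  simp only [hF, integral_const_mul, smul_eq_mul] at hscale
  rw [Real.rpow_add hs, Real.rpow_natCast, mul_assoc, hscale,
    mul_inv_cancel_left₀ (pow_ne_zero _ hs.ne')]

variable [Nontrivial E]

theorem integrable_norm_rpow_mul_comp_norm
    (hφ : IntegrableOn (fun r => r ^ ((Module.finrank ℝ E : ℝ) - 1 + p) * φ r) (Ioi 0)) :
    Integrable (fun x : E => ‖x‖ ^ p * φ ‖x‖) μ :=
  (integrable_fun_norm_addHaar μ (f := fun r => r ^ p * φ r)).2 <|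
    hφ.congr_fun (eqOn_pow_pred_smul_rpow_mul Module.finrank_pos p φ).symm measurableSet_Ioi

theorem integral_norm_rpow_mul_comp_norm :
    ∫ x : E, ‖x‖ ^ p * φ ‖x‖ ∂μ = Module.finrank ℝ E * μ.real (Metric.ball 0 1)
      * ∫ r in Ioi (0 : ℝ), r ^ ((Module.finrank ℝ E : ℝ) - 1 + p) * φ r := by
  rw [integral_fun_norm_addHaar μ (fun r => r ^ p * φ r),
    setIntegral_congr_fun measurableSet_Ioi (eqOn_pow_pred_smul_rpow_mul Module.finrank_pos p φ),
    nsmul_eq_mul, smul_eq_mul, mul_assoc]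

end Radial

theorem tendsto_integral_mul_comp_smul_nhds_zero {E : Type*} [NormedAddCommGroup E]
    [NormedSpace ℝ E] [MeasurableSpace E] [OpensMeasurableSpace E] {μ : Measure E}
    {H : E → ℝ} (hH : Integrable H μ) {f : E → ℝ} (hf : Continuous f) {K : ℝ}
    (hK : ∀ x, |f x| ≤ K) :
    Tendsto (fun s : ℝ => ∫ y, H y * f (s • y) ∂μ) (𝓝 0) (𝓝 ((∫ y, H y ∂μ) * f 0)) := by
  rw [← integral_mul_const]
  refine tendsto_integral_filter_of_dominated_convergence (fun y => |H y| * K)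
    (.of_forall fun s => hH.aestronglyMeasurable.mul
      (hf.comp (continuous_const_smul s)).aestronglyMeasurable)
    (.of_forall fun s => .of_forall fun y => ?_) (hH.abs.mul_const K) (.of_forall fun y => ?_)
  · rw [norm_mul, Real.norm_eq_abs, Real.norm_eq_abs]
    exact mul_le_mul_of_nonneg_left (hK _) (abs_nonneg _)
  · have : Tendsto (fun s : ℝ => s • y) (𝓝 0) (𝓝 0) := by
      simpa using (tendsto_id (x := 𝓝 (0:ℝ))).smul_const y
    exact tendsto_const_nhds.mul ((hf.tendsto 0).comp this)

theorem stmt19_general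
    (N : ℕ) (hN : 1 ≤ N) (B κ : ℝ)
    (φ : ℝ → ℝ)
    (hint : IntegrableOn (fun r => r ^ (-2 * κ - 1) * φ r) (Ioi 0))
    (v : EuclideanSpace ℝ (Fin N) → ℝ → ℝ)
    (hv : ∀ (x : EuclideanSpace ℝ (Fin N)) (t : ℝ), 0 < t →
      v x t = B * t ^ κ * φ (‖x‖ / Real.sqrt t))
    (ωN M₁ : ℝ)
    (hω : ωN = N * (volume (Metric.ball (0 : EuclideanSpace ℝ (Fin N)) 1)).toReal)
    (hM₁ : M₁ = B * ωN * ∫ r in Ioi (0:ℝ), r ^ (-2 * κ - 1) * φ r) :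
    ∀ f : EuclideanSpace ℝ (Fin N) → ℝ, Continuous f → (∃ K, ∀ x, |f x| ≤ K) →
      Tendsto (fun t => ∫ x, ‖x‖ ^ (-2 * κ - (N : ℝ)) * v x t * f x)
        (𝓝[>] (0:ℝ)) (𝓝 (M₁ * f 0)) := by
  rintro f hf ⟨K, hK⟩
  have hdim : Module.finrank ℝ (EuclideanSpace ℝ (Fin N)) = N := finrank_euclideanSpace_fin
  have : Nontrivial (EuclideanSpace ℝ (Fin N)) := Module.finrank_pos_iff.mp (hdim ▸ hN)
  set p := -2 * κ - (N : ℝ)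
  have hexp : (N : ℝ) - 1 + p = -2 * κ - 1 := by ring
  have hH := integrable_norm_rpow_mul_comp_norm volume p φ (by rwa [hdim, hexp])
  have hmass : B * ∫ x : EuclideanSpace ℝ (Fin N), ‖x‖ ^ p * φ ‖x‖ = M₁ := by
    rw [integral_norm_rpow_mul_comp_norm, hdim, hexp, hM₁, hω, measureReal_def]
    ring
  have hrescale : ∀ t ∈ Ioi (0 : ℝ), ∫ x, ‖x‖ ^ p * v x t * f x
      = B * ∫ y, ‖y‖ ^ p * φ ‖y‖ * f (Real.sqrt t • y) := fun t (ht : 0 < t) => by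
    have hself_similar : t ^ κ * Real.sqrt t ^ ((N : ℝ) + p) = 1 := by
      rw [Real.sqrt_eq_rpow, ← Real.rpow_mul ht.le, ← Real.rpow_add ht,
        show κ + 1 / 2 * ((N : ℝ) + p) = 0 by ring, Real.rpow_zero]
    calc ∫ x, ‖x‖ ^ p * v x t * f x
        = B * t ^ κ * ∫ x, ‖x‖ ^ p * φ (‖x‖ / Real.sqrt t) * f x := by
          rw [← integral_const_mul]
          exact integral_congr_ae (.of_forall fun x => by simp only [hv x t ht]; ring)
      _ = B * ∫ y, ‖y‖ ^ p * φ ‖y‖ * f (Real.sqrt t • y) := by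
          rw [integral_norm_rpow_mul_comp_norm_div volume p φ (Real.sqrt_pos.2 ht), hdim,
            ← mul_assoc, mul_assoc B, hself_similar, mul_one]
  have hsqrt : Tendsto Real.sqrt (𝓝[>] 0) (𝓝 0) :=
    (Real.continuous_sqrt.tendsto' 0 0 Real.sqrt_zero).mono_left nhdsWithin_le_nhds
  rw [← hmass, mul_assoc]
  refine .congr' (eventuallyEq_of_mem self_mem_nhdsWithin hrescale).symm ?_
  exact ((tendsto_integral_mul_comp_smul_nhds_zero hH hf hK).comp hsqrt).const_mul B

/-- For `κ < −N/2`, the signal component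
`v(x,t) = B t^κ φ(|x|/√t)` of the forward self-similar solution is "very singular":
`|x|^{−2κ−N} v(x,t) → M₁ δ₀` in the sense of distributions as `t → 0⁺`, where
`M₁ = B ω_{N−1} ∫₀^∞ r^{−2κ−1} φ(r) dr`. -/
theorem stmt19
    (N : ℕ) (hN : 1 ≤ N) (B κ : ℝ) (hB : 0 < B) (hκ : κ < -(N : ℝ) / 2)
    (φ : ℝ → ℝ) (hφc : ContinuousOn φ (Ici 0)) (hφpos : ∀ r ∈ Ici (0:ℝ), 0 < φ r)
    (hbdd : ∃ K δ : ℝ, 0 < δ ∧ ∀ r ∈ Icc (0:ℝ) δ, φ r ≤ K)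
    (hint : IntegrableOn (fun r => r ^ (-2 * κ - 1) * φ r) (Ioi 0))
    (v : EuclideanSpace ℝ (Fin N) → ℝ → ℝ)
    (hv : ∀ (x : EuclideanSpace ℝ (Fin N)) (t : ℝ), 0 < t →
      v x t = B * t ^ κ * φ (‖x‖ / Real.sqrt t))
    (ωN M₁ : ℝ)
    (hω : ωN = N * (volume (Metric.ball (0 : EuclideanSpace ℝ (Fin N)) 1)).toReal)
    (hM₁ : M₁ = B * ωN * ∫ r in Ioi (0:ℝ), r ^ (-2 * κ - 1) * φ r) :
    ∀ f : EuclideanSpace ℝ (Fin N) → ℝ, Continuous f → (∃ K, ∀ x, |f x| ≤ K) →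
      Tendsto (fun t => ∫ x, ‖x‖ ^ (-2 * κ - (N : ℝ)) * v x t * f x)
        (𝓝[>] (0:ℝ)) (𝓝 (M₁ * f 0)) :=
  stmt19_general N hN B κ φ hint v hv ωN M₁ hω hM₁
end
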